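/- arXiv:2101.11536 — 6 statements merged into one kernel-verified Lean document; each statement's English description precedes it below -/
import Mathlib

section
/- Let f : ℝ^m → ℝ be continuously differentiable on a box x with center c and radius vector r. Suppose ∇̲ ∈ ℝ^m (componentwise nonnegative) satisfies ∇̲_i ≤ |∂f/∂x_i (c₁,…,c_{i−1}, ξ_i, …, ξ_m)| for all ξ ∈ x and all i (i.e., ∇̲_i is a lower bound of the absolute partial derivative on the slice where the first i−1 coordinates are fixed at the center). Then the interval [f(c) − ⟨∇̲, r⟩, f(c) + ⟨∇̲, r⟩] is contained in the range of f over the box x: every z in this interval equals f(x) for some x ∈ x. -/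
/-!
Move the coordinates one at a time, from the last to the first, starting at the centre. When
coordinate `i` is moved, the coordinates before it are still at the centre, so the hypothesis
bounds `|∂ᵢf| ≥ Lᵢ` along that whole segment. By Darboux's theorem `∂ᵢf` then has constant sign
there, so one of the two ends of the segment raises `f` by at least `Lᵢ rᵢ` (mean value
inequality). This reaches a point of the box where `f ≥ f(c) + ⟨L, r⟩`, and likewise (for `-f`)
one where `f ≤ f(c) - ⟨L, r⟩`; the intermediate value theorem on the connected box does the rest.
-/

open Set Function

section OneDim

variable {g D : ℝ → ℝ} {L : ℝ}

theorem Set.OrdConnected.forall_le_or_forall_le_neg_of_le_abs_hasDerivWithinAt {s : Set ℝ}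
    (hs : s.OrdConnected) (hg : ∀ t ∈ s, HasDerivWithinAt g (D t) s t) (hL : 0 < L)
    (hD : ∀ t ∈ s, L ≤ |D t|) : (∀ t ∈ s, L ≤ D t) ∨ (∀ t ∈ s, D t ≤ -L) := by
  by_contra! ⟨⟨t₁, ht₁, hD₁⟩, ⟨t₂, ht₂, hD₂⟩⟩
  have hneg : D t₁ ≤ -L := (le_abs'.mp (hD t₁ ht₁)).resolve_right hD₁.not_ge
  have hpos : L ≤ D t₂ := (le_abs'.mp (hD t₂ ht₂)).resolve_left hD₂.not_ge
  -- Darboux: `D` takes the value `0` between `t₁` and `t₂`.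
  obtain ⟨t₀, ht₀, hD₀⟩ : (0 : ℝ) ∈ D '' s :=
    (hs.image_hasDerivWithinAt hg).out (mem_image_of_mem D ht₁) (mem_image_of_mem D ht₂)
      ⟨by linarith, by linarith⟩
  have := hD t₀ ht₀
  rw [hD₀, abs_zero] at this
  linarith

theorem Convex.mul_sub_le_image_sub_of_le_hasDerivWithinAt {s : Set ℝ} (hs : Convex ℝ s)
    (hg : ∀ t ∈ s, HasDerivWithinAt g (D t) s t) (hD : ∀ t ∈ s, L ≤ D t)
    {x y : ℝ} (hx : x ∈ s) (hy : y ∈ s) (hxy : x ≤ y) : L * (y - x) ≤ g y - g x := by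
  have hderiv : ∀ t ∈ s, HasDerivWithinAt (fun t => g t - L * t) (D t - L) s t := fun t ht => by
    simpa using (hg t ht).fun_sub ((hasDerivWithinAt_id t s).const_mul L)
  have hmono : MonotoneOn (fun t => g t - L * t) s :=
    monotoneOn_of_hasDerivWithinAt_nonneg hs (fun t ht => (hderiv t ht).continuousWithinAt)
      (fun t ht => (hderiv t (interior_subset ht)).mono interior_subset)
      (fun t ht => sub_nonneg.mpr (hD t (interior_subset ht)))
  linarith [hmono hx hy hxy]

theorem exists_mem_Icc_add_mul_le_of_le_abs_hasDerivWithinAt {a b : ℝ} (hab : a ≤ b)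
    (hL : 0 ≤ L) (hg : ∀ t ∈ Icc a b, HasDerivWithinAt g (D t) (Icc a b) t)
    (hD : ∀ t ∈ Icc a b, L ≤ |D t|) :
    ∃ u ∈ Icc a b, g ((a + b) / 2) + L * ((b - a) / 2) ≤ g u := by
  have hc : (a + b) / 2 ∈ Icc a b := ⟨by linarith, by linarith⟩
  rcases hL.eq_or_lt with rfl | hL
  · exact ⟨_, hc, by simp⟩
  rcases ordConnected_Icc.forall_le_or_forall_le_neg_of_le_abs_hasDerivWithinAt hg hL hD with
    hpos | hneg
  · have := (convex_Icc a b).mul_sub_le_image_sub_of_le_hasDerivWithinAt hg hpos hc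
      (right_mem_Icc.2 hab) (by linarith)
    exact ⟨b, right_mem_Icc.2 hab, by linarith⟩
  · have := (convex_Icc a b).mul_sub_le_image_sub_of_le_hasDerivWithinAt (g := -g) (D := -D)
      (fun t ht => (hg t ht).neg) (fun t ht => le_neg.mpr (hneg t ht)) (left_mem_Icc.2 hab) hc
      (by linarith)
    exact ⟨a, left_mem_Icc.2 hab, by simp only [Pi.neg_apply] at this; linarith⟩

theorem exists_mem_Icc_le_sub_mul_of_le_abs_hasDerivWithinAt {a b : ℝ} (hab : a ≤ b)
    (hL : 0 ≤ L) (hg : ∀ t ∈ Icc a b, HasDerivWithinAt g (D t) (Icc a b) t)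
    (hD : ∀ t ∈ Icc a b, L ≤ |D t|) :
    ∃ u ∈ Icc a b, g u ≤ g ((a + b) / 2) - L * ((b - a) / 2) := by
  obtain ⟨u, hu, hgu⟩ := exists_mem_Icc_add_mul_le_of_le_abs_hasDerivWithinAt (g := -g) (D := -D)
    hab hL (fun t ht => (hg t ht).neg) (fun t ht => (abs_neg (D t)).symm ▸ hD t ht)
  exact ⟨u, hu, by simp only [Pi.neg_apply] at hgu; linarith⟩

end OneDim

theorem exists_mem_add_sum_le_of_coordinate_steps {β : Type*} {m : ℕ} {S : Set (Fin m → β)}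
    {F : (Fin m → β) → ℝ} {c : Fin m → β} (hc : c ∈ S) {δ : Fin m → ℝ}
    (hstep : ∀ z ∈ S, ∀ i, (∀ j ≤ i, z j = c j) →
      ∃ y ∈ S, (∀ j < i, y j = c j) ∧ F z + δ i ≤ F y) :
    ∃ x ∈ S, F c + ∑ i, δ i ≤ F x := by
  suffices h : ∀ k ≤ m, ∃ x ∈ S, (∀ j : Fin m, (j : ℕ) < k → x j = c j) ∧
      F c + ∑ i ∈ Finset.univ.filter (fun i : Fin m => k ≤ (i : ℕ)), δ i ≤ F x by
    obtain ⟨x, hx, -, hFx⟩ := h 0 m.zero_le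
    exact ⟨x, hx, by simpa using hFx⟩
  intro k hk
  induction hk using Nat.decreasingInduction with
  | self =>
    refine ⟨c, hc, fun _ _ => rfl, ?_⟩
    rw [Finset.filter_false_of_mem fun i _ => not_le.2 i.is_lt, Finset.sum_empty, add_zero]
  | of_succ k hk ih =>
    obtain ⟨x, hx, hxc, hFx⟩ := ih
    obtain ⟨y, hy, hyc, hFy⟩ := hstep x hx ⟨k, hk⟩ fun j hj => hxc j (Nat.lt_succ_of_le hj)
    have hsplit : Finset.univ.filter (fun i : Fin m => k ≤ (i : ℕ)) =
        insert ⟨k, hk⟩ (Finset.univ.filter fun i : Fin m => k + 1 ≤ (i : ℕ)) := by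
      ext j
      simp only [Finset.mem_filter, Finset.mem_univ, true_and, Finset.mem_insert, Fin.ext_iff]
      omega
    refine ⟨y, hy, hyc, ?_⟩
    rw [hsplit, Finset.sum_insert (by simp)]
    linarith

theorem update_mem_Icc {ι : Type*} [DecidableEq ι] {α : ι → Type*} [∀ i, Preorder (α i)]
    {lo hi z : ∀ i, α i} (hz : z ∈ Icc lo hi) {i : ι} {t : α i} (ht : t ∈ Icc (lo i) (hi i)) :
    update z i t ∈ Icc lo hi :=
  ⟨le_update_iff.2 ⟨ht.1, fun j _ => hz.1 j⟩, update_le_iff.2 ⟨ht.2, fun j _ => hz.2 j⟩⟩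

section Box

variable {m : ℕ} {f : (Fin m → ℝ) → ℝ} {lo hi : Fin m → ℝ}

theorem hasDerivWithinAt_comp_update (hf : DifferentiableOn ℝ f (Icc lo hi))
    {z : Fin m → ℝ} (hz : z ∈ Icc lo hi) (i : Fin m) {t : ℝ} (ht : t ∈ Icc (lo i) (hi i)) :
    HasDerivWithinAt (fun s => f (update z i s))
      (fderivWithin ℝ f (Icc lo hi) (update z i t) (Pi.single i 1)) (Icc (lo i) (hi i)) t :=
  (hf _ (update_mem_Icc hz ht)).hasFDerivWithinAt.comp_hasDerivWithinAt t
    (hasDerivAt_update z i t).hasDerivWithinAt fun _ hs => update_mem_Icc hz hs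

theorem exists_update_add_le_and_exists_update_le_sub (hle : lo ≤ hi)
    (hf : DifferentiableOn ℝ f (Icc lo hi)) {z : Fin m → ℝ} (hz : z ∈ Icc lo hi) {i : Fin m}
    (hzi : z i = (lo i + hi i) / 2) {l : ℝ} (hl : 0 ≤ l)
    (hbound : ∀ t ∈ Icc (lo i) (hi i),
      l ≤ |fderivWithin ℝ f (Icc lo hi) (update z i t) (Pi.single i 1)|) :
    (∃ t ∈ Icc (lo i) (hi i), f z + l * ((hi i - lo i) / 2) ≤ f (update z i t)) ∧
      (∃ t ∈ Icc (lo i) (hi i), f (update z i t) ≤ f z - l * ((hi i - lo i) / 2)) := by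
  have hfz : f z = f (update z i ((lo i + hi i) / 2)) := by rw [← hzi, update_eq_self]
  have hg := fun t ht => hasDerivWithinAt_comp_update hf hz i (t := t) ht
  rw [hfz]
  exact ⟨exists_mem_Icc_add_mul_le_of_le_abs_hasDerivWithinAt (hle i) hl hg hbound,
    exists_mem_Icc_le_sub_mul_of_le_abs_hasDerivWithinAt (hle i) hl hg hbound⟩

theorem exists_mem_Icc_add_le_and_exists_mem_Icc_le_sub (hle : lo ≤ hi)
    (hf : DifferentiableOn ℝ f (Icc lo hi)) {L : Fin m → ℝ} (hLpos : ∀ i, 0 ≤ L i)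
    (hL : ∀ ξ ∈ Icc lo hi, ∀ i : Fin m,
      L i ≤ |fderivWithin ℝ f (Icc lo hi)
              (fun j => if (j : ℕ) < (i : ℕ) then (lo j + hi j) / 2 else ξ j)
              (Pi.single i 1)|)
    {z : Fin m → ℝ} (hz : z ∈ Icc lo hi) {i : Fin m} (hzc : ∀ j ≤ i, z j = (lo j + hi j) / 2) :
    (∃ y ∈ Icc lo hi, (∀ j < i, y j = (lo j + hi j) / 2) ∧
      f z + L i * ((hi i - lo i) / 2) ≤ f y) ∧
    (∃ y ∈ Icc lo hi, (∀ j < i, y j = (lo j + hi j) / 2) ∧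
      f y ≤ f z - L i * ((hi i - lo i) / 2)) := by
  have hcoord : ∀ t, ∀ j < i, update z i t j = (lo j + hi j) / 2 := fun t j hj => by
    rw [update_of_ne hj.ne, hzc j hj.le]
  have hslice : ∀ t, (fun j : Fin m => if (j : ℕ) < (i : ℕ) then (lo j + hi j) / 2
      else update z i t j) = update z i t := fun t => funext fun j => by
    split_ifs with hj
    exacts [(hcoord t j hj).symm, rfl]
  obtain ⟨⟨u, hu, hfu⟩, ⟨v, hv, hfv⟩⟩ := exists_update_add_le_and_exists_update_le_sub hle hf hz
    (hzc i le_rfl) (hLpos i) fun t ht => hslice t ▸ hL _ (update_mem_Icc hz ht) i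
  exact ⟨⟨_, update_mem_Icc hz hu, hcoord u, hfu⟩, ⟨_, update_mem_Icc hz hv, hcoord v, hfv⟩⟩

end Box

/-- Under-approximation half of the mean-value AE extension (Theorem 1):
if `L i ≥ 0` lower-bounds `|∂f/∂x_i|` on the slice of the box where the first
`i-1` coordinates are fixed at the center, then the interval
`[f(c) − ⟨L, r⟩, f(c) + ⟨L, r⟩]` is contained in the range of `f` over the box. -/
theorem meanValue_under_approx {m : ℕ} (f : (Fin m → ℝ) → ℝ) (lo hi : Fin m → ℝ)
    (hle : lo ≤ hi) (L : Fin m → ℝ) (hLpos : ∀ i, 0 ≤ L i)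
    (hf : ContDiffOn ℝ 1 f (Set.Icc lo hi))
    (hL : ∀ ξ ∈ Set.Icc lo hi, ∀ i : Fin m,
      L i ≤ |fderivWithin ℝ f (Set.Icc lo hi)
              (fun j => if (j : ℕ) < (i : ℕ) then (lo j + hi j) / 2 else ξ j)
              (Pi.single i 1)|) :
    Set.Icc
      (f (fun i => (lo i + hi i) / 2) - ∑ i, L i * ((hi i - lo i) / 2))
      (f (fun i => (lo i + hi i) / 2) + ∑ i, L i * ((hi i - lo i) / 2))
      ⊆ f '' Set.Icc lo hi := by
  set c : Fin m → ℝ := fun i => (lo i + hi i) / 2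
  have hc : c ∈ Icc lo hi :=
    ⟨fun i => by simp only [c]; linarith [hle i], fun i => by simp only [c]; linarith [hle i]⟩
  have hstep := @exists_mem_Icc_add_le_and_exists_mem_Icc_le_sub _ _ _ _ hle
    (hf.differentiableOn one_ne_zero) _ hLpos hL
  obtain ⟨xp, hxp, hfxp⟩ :=
    exists_mem_add_sum_le_of_coordinate_steps hc fun _ hz _ hzc => (hstep hz hzc).1
  obtain ⟨xm, hxm, hfxm⟩ :=
    exists_mem_add_sum_le_of_coordinate_steps (F := -f)
      (δ := fun i => L i * ((hi i - lo i) / 2)) hc fun _ hz _ hzc => by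
      obtain ⟨y, hy, hyc, hfy⟩ := (hstep hz hzc).2
      exact ⟨y, hy, hyc, by simp only [Pi.neg_apply]; linarith⟩
  intro w hw
  simp only [Pi.neg_apply] at hfxm
  exact (convex_Icc lo hi).isPreconnected.intermediate_value hxm hxp hf.continuousOn
    ⟨by linarith [hw.1], by linarith [hw.2]⟩
end

section
/- Let f₁, f₂ : ℝ² → ℝ be continuous on a compact box x₁ × x₂ ⊂ ℝ², and let z₁, z₂ be intervals. Suppose there exist continuous selections g₂ : z₁ × x₁ → x₂ and g₁ : z₂ × x₂ → x₁ such that f₁(x₁, g₂(z₁,x₁)) = z₁ for all (z₁,x₁) and f₂(g₁(z₂,x₂), x₂) = z₂ for all (z₂,x₂). Then for every (z₁,z₂) ∈ z₁ × z₂ there exists (x₁,x₂) ∈ x₁ × x₂ with f₁(x₁,x₂) = z₁ and f₂(x₁,x₂) = z₂, i.e., z₁ × z₂ ⊆ range((f₁,f₂), x₁ × x₂). -/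
/-! For fixed `(z₁, z₂)`, a fixed point `x₁` of `x ↦ g₁ (z₂, g₂ (z₁, x))` yields the solution
`(x₁, g₂ (z₁, x₁))`: the first equation holds because `g₂` is a selection for `f₁`, the second
because `g₁` is one for `f₂` and returns `x₁` at `g₂ (z₁, x₁)`. That composite is a continuous
self-map of the interval `[a₁, b₁]`, so the one-dimensional Brouwer theorem (the intermediate
value theorem) supplies the fixed point; the two-dimensional Brouwer theorem is not needed. -/

open Set Function

theorem exists_mem_Icc_isFixedPt_comp_of_mapsTo {X Y : Type*} [ConditionallyCompleteLinearOrder X]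
    [TopologicalSpace X] [OrderTopology X] [DenselyOrdered X] [TopologicalSpace Y]
    {a b : X} {t : Set Y} {s : X → Y} {r : Y → X} (hab : a ≤ b)
    (hs : ContinuousOn s (Icc a b)) (hst : MapsTo s (Icc a b) t)
    (hr : ContinuousOn r t) (hrt : MapsTo r t (Icc a b)) :
    ∃ x ∈ Icc a b, IsFixedPt (r ∘ s) x :=
  exists_mem_Icc_isFixedPt_of_mapsTo (hr.comp hs hst) hab (hrt.comp hst)

theorem joint_under_approx_dim2_general
    (f₁ f₂ : ℝ × ℝ → ℝ)
    (a₁ b₁ a₂ b₂ : ℝ) (hx₁ : a₁ ≤ b₁)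
    (c₁ d₁ c₂ d₂ : ℝ)
    (g₂ : ℝ × ℝ → ℝ) (g₁ : ℝ × ℝ → ℝ)
    (hg₂cont : ContinuousOn g₂ (Set.Icc c₁ d₁ ×ˢ Set.Icc a₁ b₁))
    (hg₁cont : ContinuousOn g₁ (Set.Icc c₂ d₂ ×ˢ Set.Icc a₂ b₂))
    (hg₂maps : ∀ z₁ ∈ Set.Icc c₁ d₁, ∀ x₁ ∈ Set.Icc a₁ b₁, g₂ (z₁, x₁) ∈ Set.Icc a₂ b₂)
    (hg₁maps : ∀ z₂ ∈ Set.Icc c₂ d₂, ∀ x₂ ∈ Set.Icc a₂ b₂, g₁ (z₂, x₂) ∈ Set.Icc a₁ b₁)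
    (hg₂sel : ∀ z₁ ∈ Set.Icc c₁ d₁, ∀ x₁ ∈ Set.Icc a₁ b₁, f₁ (x₁, g₂ (z₁, x₁)) = z₁)
    (hg₁sel : ∀ z₂ ∈ Set.Icc c₂ d₂, ∀ x₂ ∈ Set.Icc a₂ b₂, f₂ (g₁ (z₂, x₂), x₂) = z₂) :
    ∀ z₁ ∈ Set.Icc c₁ d₁, ∀ z₂ ∈ Set.Icc c₂ d₂,
      ∃ x₁ ∈ Set.Icc a₁ b₁, ∃ x₂ ∈ Set.Icc a₂ b₂,
        f₁ (x₁, x₂) = z₁ ∧ f₂ (x₁, x₂) = z₂ := by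
  intro z₁ hz₁ z₂ hz₂
  obtain ⟨x₁, hx₁m, hfix⟩ : ∃ x ∈ Icc a₁ b₁, g₁ (z₂, g₂ (z₁, x)) = x :=
    exists_mem_Icc_isFixedPt_comp_of_mapsTo (s := curry g₂ z₁) (r := curry g₁ z₂) hx₁
      (hg₂cont.uncurry_left z₁ hz₁) (hg₂maps z₁ hz₁) (hg₁cont.uncurry_left z₂ hz₂) (hg₁maps z₂ hz₂)
  have hx₂m : g₂ (z₁, x₁) ∈ Icc a₂ b₂ := hg₂maps z₁ hz₁ x₁ hx₁m
  refine ⟨x₁, hx₁m, g₂ (z₁, x₁), hx₂m, hg₂sel z₁ hz₁ x₁ hx₁m, ?_⟩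
  simpa only [hfix] using hg₁sel z₂ hz₂ _ hx₂m

/-- Two-dimensional case of Theorem 3 (joint under-approximation): given continuous
selections `g₂` and `g₁` witnessing the two AE propositions, every point of
`z₁ × z₂` is in the range of `(f₁, f₂)` over `x₁ × x₂`. -/
theorem joint_under_approx_dim2
    (f₁ f₂ : ℝ × ℝ → ℝ)
    (a₁ b₁ a₂ b₂ : ℝ) (hx₁ : a₁ ≤ b₁) (hx₂ : a₂ ≤ b₂)
    (c₁ d₁ c₂ d₂ : ℝ) (hz₁ : c₁ ≤ d₁) (hz₂ : c₂ ≤ d₂)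
    (hf₁ : ContinuousOn f₁ (Set.Icc a₁ b₁ ×ˢ Set.Icc a₂ b₂))
    (hf₂ : ContinuousOn f₂ (Set.Icc a₁ b₁ ×ˢ Set.Icc a₂ b₂))
    (g₂ : ℝ × ℝ → ℝ) (g₁ : ℝ × ℝ → ℝ)
    (hg₂cont : ContinuousOn g₂ (Set.Icc c₁ d₁ ×ˢ Set.Icc a₁ b₁))
    (hg₁cont : ContinuousOn g₁ (Set.Icc c₂ d₂ ×ˢ Set.Icc a₂ b₂))
    (hg₂maps : ∀ z₁ ∈ Set.Icc c₁ d₁, ∀ x₁ ∈ Set.Icc a₁ b₁, g₂ (z₁, x₁) ∈ Set.Icc a₂ b₂)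
    (hg₁maps : ∀ z₂ ∈ Set.Icc c₂ d₂, ∀ x₂ ∈ Set.Icc a₂ b₂, g₁ (z₂, x₂) ∈ Set.Icc a₁ b₁)
    (hg₂sel : ∀ z₁ ∈ Set.Icc c₁ d₁, ∀ x₁ ∈ Set.Icc a₁ b₁, f₁ (x₁, g₂ (z₁, x₁)) = z₁)
    (hg₁sel : ∀ z₂ ∈ Set.Icc c₂ d₂, ∀ x₂ ∈ Set.Icc a₂ b₂, f₂ (g₁ (z₂, x₂), x₂) = z₂) :
    ∀ z₁ ∈ Set.Icc c₁ d₁, ∀ z₂ ∈ Set.Icc c₂ d₂,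
      ∃ x₁ ∈ Set.Icc a₁ b₁, ∃ x₂ ∈ Set.Icc a₂ b₂,
        f₁ (x₁, x₂) = z₁ ∧ f₂ (x₁, x₂) = z₂ :=
  joint_under_approx_dim2_general f₁ f₂ a₁ b₁ a₂ b₂ hx₁ c₁ d₁ c₂ d₂ g₂ g₁ hg₂cont hg₁cont hg₂maps
    hg₁maps hg₂sel hg₁sel
end

section
/- Let f : ℝ^m → ℝ^n be continuous on a compact box x = x₁ × ⋯ × x_m ⊂ ℝ^m, and let π : {1,…,m} → {1,…,n}. For each i ∈ {1,…,n} set J_E^i = π⁻¹(i) and J_A^i = {1,…,m} \ J_E^i. Suppose that for each i there is a continuous function h_i : z_i × ∏_{j∈J_A^i} x_j → ∏_{j∈J_E^i} x_j such that f_i of the point assembled from (x_j)_{j∈J_A^i} and h_i(z_i, (x_j)_{j∈J_A^i}) equals z_i, for all arguments in the stated domains. Then z = z₁ × ⋯ × z_n (if nonempty) satisfies: for every z ∈ z, there exists x ∈ x with f(x) = z. -/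
set_option maxHeartbeats 1000000

open Metric MeasureTheory Set Topology Filter

section SmoothApprox

variable {m : ℕ}

local notation "𝔼" => EuclideanSpace ℝ (Fin m)

lemma norm_le_sum_abs (z : 𝔼) : ‖z‖ ≤ ∑ i, |z i| := by
  rw [EuclideanSpace.norm_eq]
  have h1 : ∑ i, ‖z i‖ ^ 2 ≤ (∑ i, |z i|) ^ 2 := by
    simpa [Real.norm_eq_abs] using
      Finset.sum_sq_le_sq_sum_of_nonneg (f := fun i => |z i|) (s := Finset.univ)
        (fun i _ => abs_nonneg _)
  calc √(∑ i, ‖z i‖ ^ 2) ≤ √((∑ i, |z i|) ^ 2) := Real.sqrt_le_sqrt h1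
    _ = abs (∑ i, |z i|) := Real.sqrt_sq_eq_abs _
    _ = ∑ i, |z i| := abs_of_nonneg (Finset.sum_nonneg fun i _ => abs_nonneg _)

/-- Any continuous self-map of the closed unit ball can be approximated by a smooth one. -/
lemma exists_smooth_approx (T : 𝔼 → 𝔼) (hT : ContinuousOn T (closedBall 0 1))
    (hTm : MapsTo T (closedBall 0 1) (closedBall 0 1)) {ε : ℝ} (hε : 0 < ε) :
    ∃ g : 𝔼 → 𝔼, ContDiff ℝ (⊤ : ℕ∞) g ∧ MapsTo g (closedBall 0 1) (closedBall 0 1) ∧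
      ∀ x ∈ closedBall (0:𝔼) 1, ‖g x - T x‖ < ε := by
  classical
  have hXc : IsCompact (closedBall (0:𝔼) 1) := isCompact_closedBall 0 1
  haveI : CompactSpace (closedBall (0:𝔼) 1) := isCompact_iff_compactSpace.mp hXc
  set X := closedBall (0:𝔼) 1
  -- the subalgebra generated by the coordinate functions
  let coord : Fin m → C(X, ℝ) := fun i =>
    ⟨fun y => (y : 𝔼) i, by
      exact (continuous_apply i).comp ((PiLp.continuous_ofLp 2 _).comp continuous_subtype_val)⟩
  let A : Subalgebra ℝ C(X, ℝ) := Algebra.adjoin ℝ (Set.range coord)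
  have hsep : A.SeparatesPoints := by
    intro x y hxy
    have : (x : 𝔼) ≠ (y : 𝔼) := fun hc => hxy (Subtype.ext hc)
    have : ∃ i, (x : 𝔼) i ≠ (y : 𝔼) i := by
      by_contra hcon
      push_neg at hcon
      exact this (by ext i; exact hcon i)
    obtain ⟨i, hi⟩ := this
    exact ⟨coord i, ⟨coord i, Algebra.subset_adjoin ⟨i, rfl⟩, rfl⟩, hi⟩
  -- every element of the subalgebra extends to a smooth function
  have hsmooth : ∀ p : C(X, ℝ), p ∈ A → ∃ q : 𝔼 → ℝ, ContDiff ℝ (⊤ : ℕ∞) q ∧ ∀ y : X, q y = p y := by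
    intro p hp
    induction hp using Algebra.adjoin_induction with
    | mem p hp =>
      obtain ⟨i, rfl⟩ := hp
      exact ⟨fun x => x i, (EuclideanSpace.proj (𝕜 := ℝ) i).contDiff, fun y => rfl⟩
    | algebraMap r => exact ⟨fun _ => r, contDiff_const, fun y => rfl⟩
    | add p₁ p₂ h₁ h₂ ih₁ ih₂ =>
      obtain ⟨q₁, hq₁, he₁⟩ := ih₁; obtain ⟨q₂, hq₂, he₂⟩ := ih₂
      exact ⟨q₁ + q₂, hq₁.add hq₂, fun y => by simp [he₁ y, he₂ y]⟩
    | mul p₁ p₂ h₁ h₂ ih₁ ih₂ =>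
      obtain ⟨q₁, hq₁, he₁⟩ := ih₁; obtain ⟨q₂, hq₂, he₂⟩ := ih₂
      exact ⟨q₁ * q₂, hq₁.mul hq₂, fun y => by simp [he₁ y, he₂ y]⟩
  -- componentwise approximation
  set δ : ℝ := ε / (4 * (m + 1)) with hδdef
  have hδ : 0 < δ := by positivity
  have happrox : ∀ i : Fin m, ∃ q : 𝔼 → ℝ, ContDiff ℝ (⊤ : ℕ∞) q ∧
      ∀ y : X, ‖q y - T y i‖ < δ := by
    intro i
    have hTc : Continuous fun y : X => T y i :=
      (continuous_apply i).comp ((PiLp.continuous_ofLp 2 fun _ : Fin m => ℝ).comp hT.restrict)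
    obtain ⟨g, hg⟩ := ContinuousMap.exists_mem_subalgebra_near_continuous_of_separatesPoints
      A hsep (fun y : X => T y i) hTc δ hδ
    obtain ⟨q, hq, he⟩ := hsmooth g g.2
    exact ⟨q, hq, fun y => by rw [he y]; exact hg y⟩
  choose q hq hqe using happrox
  -- assemble
  let g₀ : 𝔼 → 𝔼 := fun x => (EuclideanSpace.equiv (Fin m) ℝ).symm (fun i => q i x)
  have hg₀ : ContDiff ℝ (⊤ : ℕ∞) g₀ := by
    apply ((EuclideanSpace.equiv (Fin m) ℝ).symm : (Fin m → ℝ) →L[ℝ] 𝔼).contDiff.comp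
    exact contDiff_pi.mpr hq
  have hg₀i : ∀ (x : 𝔼) (i : Fin m), g₀ x i = q i x := fun x i => rfl
  have hg₀T : ∀ x ∈ X, ‖g₀ x - T x‖ ≤ ε / 4 := by
    intro x hx
    calc ‖g₀ x - T x‖ ≤ ∑ i, |(g₀ x - T x) i| := norm_le_sum_abs _
      _ ≤ ∑ _i : Fin m, δ := by
          apply Finset.sum_le_sum
          intro i _
          have := hqe i ⟨x, hx⟩
          simp only [Real.norm_eq_abs] at this
          have hco : (g₀ x - T x) i = q i x - T x i := by
            simp [hg₀i, PiLp.sub_apply]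
          rw [hco]
          exact le_of_lt this
      _ = m * δ := by simp [mul_comm]
      _ ≤ ε / 4 := by
          have hm1 : (0:ℝ) < (m:ℝ) + 1 := by positivity
          calc (m:ℝ) * δ ≤ ((m:ℝ) + 1) * δ := by nlinarith [hδ.le]
            _ = ε / 4 := by rw [hδdef]; field_simp
  -- rescale to land inside the ball
  set c : ℝ := ε / 4 with hcdef
  have hc : 0 < c := by positivity
  refine ⟨fun x => (1 + c)⁻¹ • g₀ x, hg₀.const_smul _, ?_, ?_⟩
  · intro x hx
    have h1 : ‖g₀ x‖ ≤ 1 + c := by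
      have := hg₀T x hx
      have h2 : ‖T x‖ ≤ 1 := by simpa [X, mem_closedBall, dist_eq_norm] using hTm hx
      calc ‖g₀ x‖ ≤ ‖g₀ x - T x‖ + ‖T x‖ := by
            simpa using norm_add_le (g₀ x - T x) (T x)
        _ ≤ c + 1 := add_le_add this h2
        _ = 1 + c := add_comm _ _
    simp only [X, mem_closedBall, dist_eq_norm, sub_zero, norm_smul, norm_inv]
    rw [Real.norm_of_nonneg (by positivity : (0:ℝ) ≤ 1 + c)]
    rw [inv_mul_le_iff₀ (by positivity), mul_one]
    exact h1
  · intro x hx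
    have h1 : ‖g₀ x‖ ≤ 1 + c := by
      have := hg₀T x hx
      have h2 : ‖T x‖ ≤ 1 := by simpa [X, mem_closedBall, dist_eq_norm] using hTm hx
      calc ‖g₀ x‖ ≤ ‖g₀ x - T x‖ + ‖T x‖ := by
            simpa using norm_add_le (g₀ x - T x) (T x)
        _ ≤ c + 1 := add_le_add (hg₀T x hx) h2
        _ = 1 + c := add_comm _ _
    have key : ‖(1 + c)⁻¹ • g₀ x - g₀ x‖ ≤ c := by
      have : (1 + c)⁻¹ • g₀ x - g₀ x = ((1 + c)⁻¹ - 1) • g₀ x := by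
        rw [sub_smul, one_smul]
      rw [this, norm_smul]
      have habs : ‖(1 + c)⁻¹ - 1‖ = c / (1 + c) := by
        rw [Real.norm_eq_abs, abs_of_nonpos]
        · field_simp; ring
        · have : (1 + c)⁻¹ ≤ 1 := by
            rw [inv_le_one_iff₀]; right; linarith
          linarith
      rw [habs]
      calc c / (1 + c) * ‖g₀ x‖ ≤ c / (1 + c) * (1 + c) := by
            apply mul_le_mul_of_nonneg_left h1 (by positivity)
        _ = c := by field_simp
    calc ‖(1 + c)⁻¹ • g₀ x - T x‖ ≤ ‖(1 + c)⁻¹ • g₀ x - g₀ x‖ + ‖g₀ x - T x‖ := by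
          simpa using norm_add_le ((1 + c)⁻¹ • g₀ x - g₀ x) (g₀ x - T x)
      _ ≤ c + ε / 4 := add_le_add key (hg₀T x hx)
      _ = ε / 2 := by rw [hcdef]; ring
      _ < ε := by linarith

end SmoothApprox



lemma det_one_add_smul_expand {m : ℕ} (t : ℝ) (N : Matrix (Fin m) (Fin m) ℝ) :
    (1 + t • N).det = ∑ S : Finset (Fin m),
      t ^ S.card * (Matrix.of (S.piecewise N (1 : Matrix (Fin m) (Fin m) ℝ))).det := by
  classical
  have h0 : (1 + t • N : Matrix (Fin m) (Fin m) ℝ) =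
      Matrix.of ((fun i => t • (N i)) + (fun i => (1 : Matrix (Fin m) (Fin m) ℝ) i)) := by
    ext i j
    simp [Matrix.add_apply, Matrix.smul_apply, mul_comm]
    ring
  rw [h0]
  have hdet : ∀ M : Matrix (Fin m) (Fin m) ℝ, M.det = Matrix.detRowAlternating M := fun _ => rfl
  rw [hdet]
  rw [show (Matrix.detRowAlternating (Matrix.of ((fun i => t • (N i)) +
      (fun i => (1 : Matrix (Fin m) (Fin m) ℝ) i)))) =
      (Matrix.detRowAlternating (R := ℝ) (n := Fin m)).toMultilinearMap
        ((fun i => t • (N i)) + (fun i => (1 : Matrix (Fin m) (Fin m) ℝ) i)) from rfl]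
  rw [MultilinearMap.map_add_univ]
  apply Finset.sum_congr rfl
  intro S _
  have hpw : S.piecewise (fun i => t • (N i)) (fun i => (1 : Matrix (Fin m) (Fin m) ℝ) i) =
      S.piecewise (fun i => t • (S.piecewise N (1 : Matrix (Fin m) (Fin m) ℝ)) i)
        (S.piecewise N (1 : Matrix (Fin m) (Fin m) ℝ)) := by
    funext i
    by_cases hi : i ∈ S
    · simp [Finset.piecewise, hi]
    · simp [Finset.piecewise, hi]
  rw [hpw, MultilinearMap.map_piecewise_smul, Finset.prod_const, smul_eq_mul]
  rfl

section Milnor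

variable {m : ℕ}

local notation "𝔼" => EuclideanSpace ℝ (Fin m)
local notation "⟪" x ", " y "⟫" => @inner ℝ _ _ x y

noncomputable def basE : Module.Basis (Fin m) ℝ 𝔼 :=
  (EuclideanSpace.basisFun (Fin m) ℝ).toBasis

noncomputable def matOfL : (𝔼 →L[ℝ] 𝔼) →ₗ[ℝ] Matrix (Fin m) (Fin m) ℝ :=
  (LinearMap.toMatrix (basE (m := m)) (basE (m := m))).toLinearMap ∘ₗ
    ContinuousLinearMap.coeLM ℝ

noncomputable def matOf (f : 𝔼 →L[ℝ] 𝔼) : Matrix (Fin m) (Fin m) ℝ := matOfL f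

lemma matOf_continuous : Continuous (matOf (m := m)) :=
  LinearMap.continuous_of_finiteDimensional matOfL

lemma matOf_det (f : 𝔼 →L[ℝ] 𝔼) : (matOf f).det = f.det := by
  simp only [matOf, matOfL, LinearMap.comp_apply, LinearEquiv.coe_toLinearMap,
    ContinuousLinearMap.coeLM_apply]
  exact LinearMap.det_toMatrix _ _

lemma matOf_id_add_smul (t : ℝ) (f : 𝔼 →L[ℝ] 𝔼) :
    matOf (ContinuousLinearMap.id ℝ 𝔼 + t • f) = 1 + t • matOf f := by
  have hco : ((ContinuousLinearMap.id ℝ 𝔼 + t • f : 𝔼 →L[ℝ] 𝔼) : 𝔼 →ₗ[ℝ] 𝔼) =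
      LinearMap.id + t • (f : 𝔼 →ₗ[ℝ] 𝔼) := by
    ext v; simp
  simp only [matOf, matOfL, LinearMap.comp_apply, LinearEquiv.coe_toLinearMap,
    ContinuousLinearMap.coeLM_apply]
  rw [hco, map_add, _root_.map_smul, LinearMap.toMatrix_id]

theorem smooth_no_fixed_point_absurd (g : 𝔼 → 𝔼) (hg : ContDiff ℝ (⊤ : ℕ∞) g)
    (hgm : MapsTo g (closedBall 0 1) (closedBall 0 1))
    (hfix : ∀ x ∈ closedBall (0:𝔼) 1, g x ≠ x) : False := by
  classical
  set B : Set 𝔼 := closedBall 0 1 with hBdef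
  have hBcomp : IsCompact B := isCompact_closedBall 0 1
  have hBmeas : MeasurableSet B := measurableSet_closedBall
  -- basic functions
  set u : 𝔼 → 𝔼 := fun y => y - g y with hudef
  have hu : ContDiff ℝ (⊤ : ℕ∞) u := contDiff_id.sub hg
  set bf : 𝔼 → ℝ := fun y => ⟪y, u y⟫ with hbfdef
  set nsq : 𝔼 → ℝ := fun y => ⟪u y, u y⟫ with hnsqdef
  set Δ : 𝔼 → ℝ := fun y => bf y ^ 2 + (1 - ⟪y, y⟫) * nsq y with hΔdef
  have hbf : ContDiff ℝ (⊤ : ℕ∞) bf := contDiff_id.inner ℝ hu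
  have hnsq : ContDiff ℝ (⊤ : ℕ∞) nsq := hu.inner ℝ hu
  have hΔ : ContDiff ℝ (⊤ : ℕ∞) Δ := by
    apply (hbf.pow 2).add
    exact (contDiff_const.sub (contDiff_id.inner ℝ contDiff_id)).mul hnsq
  -- the open set where the retraction is defined
  set O : Set 𝔼 := {y | u y ≠ 0 ∧ 0 < Δ y} with hOdef
  have hOopen : IsOpen O := by
    have : O = u ⁻¹' ({0}ᶜ) ∩ Δ ⁻¹' (Ioi 0) := rfl
    rw [this]
    exact (isOpen_compl_singleton.preimage hu.continuous).inter
      (isOpen_Ioi.preimage hΔ.continuous)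
  -- positivity of b on the sphere
  have hbpos : ∀ x ∈ B, ‖x‖ = 1 → 0 < bf x := by
    intro x hx hn
    have hgx : ‖g x‖ ≤ 1 := by
      have := hgm hx; rwa [hBdef, mem_closedBall_zero_iff] at this
    have hip : ⟪x, g x⟫ ≤ ‖g x‖ := by
      have := real_inner_le_norm x (g x); rwa [hn, one_mul] at this
    have hbfx : bf x = 1 - ⟪x, g x⟫ := by
      simp only [hbfdef, hudef, inner_sub_right]
      rw [real_inner_self_eq_norm_sq, hn]; norm_num
    rw [hbfx]
    by_contra hcon
    push_neg at hcon
    have h1 : ⟪x, g x⟫ = 1 := le_antisymm (hip.trans hgx) (by linarith)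
    have hgx1 : ‖g x‖ = 1 := le_antisymm hgx (by linarith [hip, h1])
    have h2 : ⟪x, g x⟫ = ‖x‖ * ‖g x‖ := by rw [h1, hn, hgx1]; norm_num
    have h3 := inner_eq_norm_mul_iff_real.mp h2
    rw [hgx1, hn, one_smul, one_smul] at h3
    exact hfix x hx h3.symm
  have hBO : B ⊆ O := by
    intro x hx
    have hxn : ‖x‖ ≤ 1 := by rwa [hBdef, mem_closedBall_zero_iff] at hx
    have hux : u x ≠ 0 := by
      simp only [hudef, sub_ne_zero]
      exact (hfix x hx).symm
    refine ⟨hux, ?_⟩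
    rcases lt_or_eq_of_le hxn with hlt | heq
    · have h1 : 0 < 1 - ⟪x, x⟫ := by
        rw [real_inner_self_eq_norm_sq]; nlinarith [norm_nonneg x]
      have h2 : 0 < nsq x := by
        simp only [hnsqdef]
        rw [real_inner_self_eq_norm_sq]
        have := norm_pos_iff.mpr hux
        positivity
      simp only [hΔdef]
      nlinarith [sq_nonneg (bf x)]
    · have h0 : 1 - ⟪x, x⟫ = 0 := by
        rw [real_inner_self_eq_norm_sq, heq]; norm_num
      simp only [hΔdef]
      rw [h0, zero_mul, add_zero]
      exact pow_pos (hbpos x hx heq) 2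
  -- the retraction
  set lam : 𝔼 → ℝ := fun y => (-bf y + Real.sqrt (Δ y)) / nsq y with hlamdef
  set w : 𝔼 → 𝔼 := fun y => lam y • u y with hwdef
  set r : 𝔼 → 𝔼 := fun y => y + w y with hrdef
  have hlam : ContDiffOn ℝ (⊤ : ℕ∞) lam O := by
    apply ContDiffOn.div
    · apply ContDiffOn.add hbf.neg.contDiffOn
      intro y hy
      exact ContDiffAt.comp_contDiffWithinAt (g := Real.sqrt) (f := Δ) (s := O) y
        (Real.contDiffAt_sqrt (ne_of_gt hy.2)) hΔ.contDiffAt.contDiffWithinAt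
    · exact hnsq.contDiffOn
    · intro y hy
      simp only [hnsqdef]
      exact fun hc => hy.1 (inner_self_eq_zero.mp hc)
  have hw : ContDiffOn ℝ (⊤ : ℕ∞) w O := hlam.smul hu.contDiffOn
  have hr : ContDiffOn ℝ (⊤ : ℕ∞) r O := contDiffOn_id.add hw
  have hrnorm : ∀ y ∈ O, ⟪r y, r y⟫ = 1 := by
    intro y hy
    have hu0 : u y ≠ 0 := hy.1
    have hΔp : 0 < Δ y := hy.2
    have hns : nsq y ≠ 0 := by
      simp only [hnsqdef]
      exact fun hc => hu0 (inner_self_eq_zero.mp hc)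
    have hs2 : Real.sqrt (Δ y) ^ 2 = Δ y := Real.sq_sqrt hΔp.le
    have hcomp : ⟪r y, r y⟫ = ⟪y, y⟫ + 2 * (lam y * bf y) + lam y ^ 2 * nsq y := by
      simp only [hrdef, hwdef]
      rw [real_inner_add_add_self, real_inner_smul_right, real_inner_smul_left,
        real_inner_smul_right]
      simp only [hbfdef, hnsqdef]
      ring
    rw [hcomp]
    have hΔeq : Δ y = bf y ^ 2 + (1 - ⟪y, y⟫) * nsq y := by rw [hΔdef]
    have hlamy : lam y = (-bf y + Real.sqrt (Δ y)) / nsq y := rfl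
    set a := bf y with ha
    set n := nsq y with hn
    set s := Real.sqrt (Δ y) with hs
    set ip : ℝ := ⟪y, y⟫ with hip
    rw [hΔeq] at hs2
    have key : 2 * (lam y * a) + lam y ^ 2 * n = 1 - ip := by
      rw [hlamy]
      have expand : 2 * ((-a + s) / n * a) + ((-a + s) / n) ^ 2 * n = (s ^ 2 - a ^ 2) / n := by
        field_simp
        ring
      rw [expand, hs2]
      field_simp; ring
    linarith
  have hrnorm' : ∀ y ∈ O, ‖r y‖ = 1 := by
    intro y hy
    have h1 := hrnorm y hy
    rw [real_inner_self_eq_norm_sq] at h1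
    nlinarith [norm_nonneg (r y)]
  have hrid : ∀ x ∈ B, ‖x‖ = 1 → w x = 0 := by
    intro x hx hn
    have h0 : 1 - ⟪x, x⟫ = 0 := by rw [real_inner_self_eq_norm_sq, hn]; norm_num
    have hΔb : Δ x = bf x ^ 2 := by simp only [hΔdef]; rw [h0, zero_mul, add_zero]
    have hsb : Real.sqrt (Δ x) = bf x := by rw [hΔb, Real.sqrt_sq (hbpos x hx hn).le]
    have hlam0 : lam x = 0 := by
      simp only [hlamdef, hsb]
      simp
    simp [hwdef, hlam0]
  -- derivative data
  set A : 𝔼 → (𝔼 →L[ℝ] 𝔼) := fun y => fderiv ℝ w y with hAdef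
  have hwdiff : ∀ y ∈ O, DifferentiableAt ℝ w y := fun y hy =>
    (hw.contDiffAt (hOopen.mem_nhds hy)).differentiableAt (by simp)
  have hAcont : ContinuousOn A O := hw.continuousOn_fderiv_of_isOpen hOopen (mod_cast le_top)
  obtain ⟨L₀, hL₀⟩ := hBcomp.exists_bound_of_continuousOn (hAcont.mono hBO)
  set L : ℝ := max L₀ 0 with hLdef
  have hL0 : 0 ≤ L := le_max_right _ _
  have hL : ∀ x ∈ B, ‖A x‖ ≤ L := fun x hx => (hL₀ x hx).trans (le_max_left _ _)
  have hlip : ∀ x ∈ B, ∀ y ∈ B, ‖w y - w x‖ ≤ L * ‖y - x‖ := by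
    intro x hx y hy
    exact Convex.norm_image_sub_le_of_norm_hasFDerivWithin_le
      (fun z hz => ((hwdiff z (hBO hz)).hasFDerivAt).hasFDerivWithinAt)
      (fun z hz => hL z hz) (convex_closedBall _ _) hx hy
  -- the homotopy
  set F : ℝ → 𝔼 → 𝔼 := fun t y => y + t • w y with hFdef
  set DF : ℝ → 𝔼 → (𝔼 →L[ℝ] 𝔼) := fun t y => ContinuousLinearMap.id ℝ 𝔼 + t • A y with hDFdef
  have hDF : ∀ (t : ℝ), ∀ y ∈ O, HasFDerivAt (F t) (DF t y) y := fun t y hy =>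
    (hasFDerivAt_id y).add (((hwdiff y hy).hasFDerivAt).const_smul t)
  have hFcont : ∀ t : ℝ, ContinuousOn (F t) B :=
    fun t => continuousOn_id.add (((hw.continuousOn).mono hBO).const_smul t)
  set t₀ : ℝ := (2 * (L + 1))⁻¹ with ht₀def
  have ht₀pos : 0 < t₀ := by positivity
  have ht₀L : ∀ t ∈ Icc (0:ℝ) t₀, t * L ≤ 1/2 := by
    intro t ht
    have h1 : t * L ≤ t₀ * L := mul_le_mul_of_nonneg_right ht.2 hL0
    have h2 : t₀ * (L + 1) = 1/2 := by
      rw [ht₀def, inv_mul_eq_div, div_eq_div_iff (by positivity) (by norm_num)]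
      ring
    nlinarith [ht₀pos.le]
  have ht₀le1 : t₀ ≤ 1 := by
    rw [ht₀def]
    rw [inv_le_one_iff₀]; right; linarith
  have hFmaps : ∀ t ∈ Icc (0:ℝ) 1, MapsTo (F t) B B := by
    intro t ht x hx
    have hxO := hBO hx
    have hxn : ‖x‖ ≤ 1 := by rwa [hBdef, mem_closedBall_zero_iff] at hx
    have hkey : F t x = (1 - t) • x + t • r x := by
      simp only [hFdef, hrdef]
      rw [smul_add, sub_smul, one_smul]
      abel
    rw [hBdef, mem_closedBall_zero_iff, hkey]
    calc ‖(1 - t) • x + t • r x‖ ≤ ‖(1 - t) • x‖ + ‖t • r x‖ := norm_add_le _ _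
      _ = (1 - t) * ‖x‖ + t * ‖r x‖ := by
          rw [norm_smul, norm_smul, Real.norm_of_nonneg (by linarith [ht.2]),
            Real.norm_of_nonneg ht.1]
      _ ≤ (1 - t) * 1 + t * 1 := by
          have := hrnorm' x hxO
          have h1 : (0:ℝ) ≤ 1 - t := by linarith [ht.2]
          rw [this]
          exact add_le_add (mul_le_mul_of_nonneg_left hxn h1) le_rfl
      _ = 1 := by ring
  have hinj : ∀ t ∈ Icc (0:ℝ) t₀, InjOn (F t) B := by
    intro t ht x hx y hy he
    simp only [hFdef] at he
    have h1 : x - y = t • w y - t • w x :=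
      sub_eq_sub_iff_add_eq_add.mpr (by rw [he]; abel)
    have h1' : ‖x - y‖ = t * ‖w y - w x‖ := by
      rw [h1, ← smul_sub, norm_smul, Real.norm_of_nonneg ht.1]
    have hwb : ‖w y - w x‖ ≤ L * ‖x - y‖ := by
      calc ‖w y - w x‖ ≤ L * ‖y - x‖ := hlip x hx y hy
        _ = L * ‖x - y‖ := by rw [norm_sub_rev]
    have h2 : ‖x - y‖ ≤ t * L * ‖x - y‖ := by
      calc ‖x - y‖ = t * ‖w y - w x‖ := h1'
        _ ≤ t * (L * ‖x - y‖) := mul_le_mul_of_nonneg_left hwb ht.1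
        _ = t * L * ‖x - y‖ := by ring
    have h3 : t * L * ‖x - y‖ ≤ 1/2 * ‖x - y‖ :=
      mul_le_mul_of_nonneg_right (ht₀L t ht) (norm_nonneg _)
    have h4 : ‖x - y‖ ≤ 0 := by linarith
    have := norm_le_zero_iff.mp h4
    exact sub_eq_zero.mp this
  have hDFinj : ∀ t ∈ Icc (0:ℝ) t₀, ∀ x ∈ B, Function.Injective (DF t x) := by
    intro t ht x hx
    have hker : ∀ v : 𝔼, DF t x v = 0 → v = 0 := by
      intro v hv
      simp only [hDFdef, ContinuousLinearMap.add_apply, ContinuousLinearMap.id_apply,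
        ContinuousLinearMap.smul_apply] at hv
      have h1 : v = -(t • (A x) v) := by
        rw [eq_neg_iff_add_eq_zero]; exact hv
      have h1' : ‖v‖ = ‖t • (A x) v‖ := by
        conv_lhs => rw [h1]
        rw [norm_neg]
      have h2 : ‖v‖ ≤ t * L * ‖v‖ := by
        calc ‖v‖ = ‖t • (A x) v‖ := h1'
          _ = t * ‖(A x) v‖ := by rw [norm_smul, Real.norm_of_nonneg ht.1]
          _ ≤ t * (L * ‖v‖) := by
              apply mul_le_mul_of_nonneg_left _ ht.1
              calc ‖(A x) v‖ ≤ ‖A x‖ * ‖v‖ := (A x).le_opNorm v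
                _ ≤ L * ‖v‖ := mul_le_mul_of_nonneg_right (hL x hx) (norm_nonneg _)
          _ = t * L * ‖v‖ := by ring
      have h3 : t * L * ‖v‖ ≤ 1/2 * ‖v‖ :=
        mul_le_mul_of_nonneg_right (ht₀L t ht) (norm_nonneg _)
      have h4 : ‖v‖ ≤ 0 := by linarith
      exact norm_le_zero_iff.mp h4
    intro a b hab
    have : DF t x (a - b) = 0 := by rw [map_sub, hab, sub_self]
    exact sub_eq_zero.mp (hker _ this)
  -- surjectivity of the homotopy for small t
  have hsurj : ∀ t ∈ Icc (0:ℝ) t₀, F t '' B = B := by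
    intro t ht
    have hball : ball (0:𝔼) 1 ⊆ B := by rw [hBdef]; exact ball_subset_closedBall
    have himgB : F t '' B ⊆ B := (hFmaps t ⟨ht.1, ht.2.trans ht₀le1⟩).image_subset
    have himgBcl : IsClosed (F t '' B) := (hBcomp.image_of_continuousOn (hFcont t)).isClosed
    have hVopen : IsOpen (F t '' ball 0 1) := by
      rw [isOpen_iff_mem_nhds]
      rintro _ ⟨x, hx, rfl⟩
      have hxB : x ∈ B := hball hx
      have hxO : x ∈ O := hBO hxB
      have hinj' := hDFinj t ht x hxB
      have hbij : Function.Bijective ((DF t x : 𝔼 →ₗ[ℝ] 𝔼)) :=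
        ⟨hinj', LinearMap.injective_iff_surjective.mp hinj'⟩
      set e : 𝔼 ≃L[ℝ] 𝔼 :=
        (LinearEquiv.ofBijective ((DF t x : 𝔼 →ₗ[ℝ] 𝔼)) hbij).toContinuousLinearEquiv with hedef
      have hecoe : (e : 𝔼 →L[ℝ] 𝔼) = DF t x := by ext v; rfl
      have hstrict : HasStrictFDerivAt (F t) ((e : 𝔼 →L[ℝ] 𝔼)) x := by
        rw [hecoe]
        have hcd : ContDiffAt ℝ (⊤ : ℕ∞) (F t) x := by
          exact contDiffAt_id.add ((hw.contDiffAt (hOopen.mem_nhds hxO)).const_smul t)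
        have h2 := hcd.hasStrictFDerivAt (by simp)
        rwa [(hDF t x hxO).fderiv] at h2
      have hmap := hstrict.map_nhds_eq_of_equiv
      rw [← hmap]
      exact image_mem_map (Metric.isOpen_ball.mem_nhds hx)
    have hVsubU : F t '' ball 0 1 ⊆ ball 0 1 := by
      have h1 : F t '' ball 0 1 ⊆ B := (image_mono hball).trans himgB
      have h2 := hVopen.subset_interior_iff.mpr h1
      rwa [hBdef, interior_closedBall (0:𝔼) one_ne_zero] at h2
    have hclosedIn : ball (0:𝔼) 1 ∩ closure (F t '' ball 0 1) ⊆ F t '' ball 0 1 := by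
      rintro y ⟨hyU, hyc⟩
      have hyB : y ∈ F t '' B := by
        have hcl : closure (F t '' ball 0 1) ⊆ F t '' B :=
          closure_minimal (image_mono hball) himgBcl
        exact hcl hyc
      obtain ⟨x, hxB, rfl⟩ := hyB
      have hxn : ‖x‖ ≤ 1 := by rwa [hBdef, mem_closedBall_zero_iff] at hxB
      rcases lt_or_eq_of_le hxn with hlt | heq
      · exact ⟨x, mem_ball_zero_iff.mpr hlt, rfl⟩
      · exfalso
        have hFx : F t x = x := by
          simp only [hFdef, hrid x hxB heq, smul_zero, add_zero]
        rw [hFx, mem_ball_zero_iff] at hyU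
        exact absurd heq (ne_of_lt hyU)
    have hsub : ball (0:𝔼) 1 ⊆ (F t '' ball 0 1) ∪ (ball 0 1 \ closure (F t '' ball 0 1)) := by
      intro y hy
      by_cases hc : y ∈ closure (F t '' ball 0 1)
      · exact Or.inl (hclosedIn ⟨hy, hc⟩)
      · exact Or.inr ⟨hy, hc⟩
    have hdisj : Disjoint (F t '' ball (0:𝔼) 1) (ball 0 1 \ closure (F t '' ball 0 1)) := by
      rw [Set.disjoint_left]
      intro y hyV hyD
      exact hyD.2 (subset_closure hyV)
    have h2open : IsOpen (ball (0:𝔼) 1 \ closure (F t '' ball 0 1)) :=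
      Metric.isOpen_ball.sdiff isClosed_closure
    have hpre : IsPreconnected (ball (0:𝔼) 1) := (convex_ball (0:𝔼) 1).isPreconnected
    rcases hpre.subset_or_subset hVopen h2open hdisj hsub with hUV | hUD
    · apply Subset.antisymm himgB
      have h1 : ball (0:𝔼) 1 ⊆ F t '' B := hUV.trans (image_mono hball)
      have h2 : B = closure (ball (0:𝔼) 1) := by rw [hBdef, closure_ball (0:𝔼) one_ne_zero]
      calc B = closure (ball (0:𝔼) 1) := h2
        _ ⊆ F t '' B := closure_minimal h1 himgBcl
    · exfalso
      have hmem : F t 0 ∈ F t '' ball 0 1 := mem_image_of_mem _ (mem_ball_self one_pos)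
      have hmemU : F t 0 ∈ ball (0:𝔼) 1 := hVsubU hmem
      exact (hUD hmemU).2 (subset_closure hmem)
  -- determinants and matrices
  set N : 𝔼 → Matrix (Fin m) (Fin m) ℝ := fun x => matOf (A x) with hNdef
  have hNdet : ∀ (t : ℝ) (x : 𝔼), (DF t x).det = (1 + t • N x).det := by
    intro t x
    rw [hNdef, ← matOf_id_add_smul, matOf_det, hDFdef]
  have hNcont : ContinuousOn N O := matOf_continuous.comp_continuousOn hAcont
  set dS : Finset (Fin m) → 𝔼 → ℝ :=
    fun S x => (Matrix.of (S.piecewise (N x) (1 : Matrix (Fin m) (Fin m) ℝ))).det with hdSdef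
  have hdScont : ∀ S, ContinuousOn (dS S) B := by
    intro S
    have h1 : ContinuousOn (fun x => Matrix.of (S.piecewise (N x) (1 : Matrix (Fin m) (Fin m) ℝ))) B := by
      apply continuousOn_pi.mpr
      intro i
      by_cases hi : i ∈ S
      · have heq : (fun x => (Matrix.of (S.piecewise (N x) (1 : Matrix (Fin m) (Fin m) ℝ))) i) =
            fun x => N x i := by
          funext x
          exact Finset.piecewise_eq_of_mem _ _ _ hi
        rw [heq]
        exact (continuous_apply i).comp_continuousOn (hNcont.mono hBO)
      · have heq : (fun x => (Matrix.of (S.piecewise (N x) (1 : Matrix (Fin m) (Fin m) ℝ))) i) =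
            fun _ => (1 : Matrix (Fin m) (Fin m) ℝ) i := by
          funext x
          exact Finset.piecewise_eq_of_notMem _ _ _ hi
        rw [heq]
        exact continuousOn_const
    exact (Continuous.matrix_det continuous_id).comp_continuousOn h1
  have hdSint : ∀ S, IntegrableOn (dS S) B := fun S =>
    (hdScont S).integrableOn_compact hBcomp
  set q : Polynomial ℝ :=
    ∑ S : Finset (Fin m), Polynomial.C (∫ x in B, dS S x) * Polynomial.X ^ S.card with hqdef
  have hqeval : ∀ t : ℝ, q.eval t = ∫ x in B, (1 + t • N x).det := by
    intro t
    have hexp : ∀ x : 𝔼, (1 + t • N x).det = ∑ S : Finset (Fin m), t ^ S.card * dS S x :=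
      fun x => det_one_add_smul_expand t (N x)
    rw [MeasureTheory.setIntegral_congr_fun hBmeas (fun x _ => hexp x)]
    rw [MeasureTheory.integral_finset_sum _ (fun S _ => ((hdSint S).const_mul _))]
    rw [hqdef]
    rw [Polynomial.eval_finset_sum]
    apply Finset.sum_congr rfl
    intro S _
    rw [MeasureTheory.integral_const_mul]
    rw [Polynomial.eval_mul, Polynomial.eval_C, Polynomial.eval_pow, Polynomial.eval_X]
    ring
  -- positivity of the determinant for small t
  have hdetpos : ∀ t ∈ Icc (0:ℝ) t₀, ∀ x ∈ B, 0 < (DF t x).det := by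
    intro t ht x hx
    have hne : ∀ s ∈ Icc (0:ℝ) t₀, (DF s x).det ≠ 0 := by
      intro s hs
      have hinj' := hDFinj s hs x hx
      have hbij : Function.Bijective ((DF s x : 𝔼 →ₗ[ℝ] 𝔼)) :=
        ⟨hinj', LinearMap.injective_iff_surjective.mp hinj'⟩
      have hunit := LinearEquiv.isUnit_det' (LinearEquiv.ofBijective ((DF s x : 𝔼 →ₗ[ℝ] 𝔼)) hbij)
      exact hunit.ne_zero
    have hcont : ContinuousOn (fun s : ℝ => (DF s x).det) (Icc 0 t) := by
      have heq : (fun s : ℝ => (DF s x).det) = fun s => (1 + s • N x).det :=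
        funext fun s => hNdet s x
      rw [heq]
      apply Continuous.continuousOn
      exact Continuous.matrix_det (continuous_const.add (continuous_id.smul continuous_const))
    have h0 : (DF 0 x).det = 1 := by
      have : DF 0 x = ContinuousLinearMap.id ℝ 𝔼 := by
        ext v
        simp [hDFdef]
      rw [this]
      simp [ContinuousLinearMap.det]
    by_contra hcon
    push_neg at hcon
    have hlt : (DF t x).det < 0 := lt_of_le_of_ne hcon (hne t ht)
    have hsubI : Icc (0:ℝ) t ⊆ Icc 0 t₀ := Icc_subset_Icc le_rfl ht.2
    have hivt := intermediate_value_Icc' ht.1 hcont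
    have h0mem : (0:ℝ) ∈ Icc ((DF t x).det) ((DF 0 x).det) := ⟨hlt.le, by rw [h0]; norm_num⟩
    obtain ⟨s, hsmem, hs0⟩ := hivt h0mem
    exact hne s (hsubI hsmem) hs0
  -- change of variables
  set volB : ℝ := (volume B).toReal with hvolBdef
  have hvolBpos : 0 < volB := by
    rw [hvolBdef]
    apply ENNReal.toReal_pos
    · have h1 : volume (ball (0:𝔼) 1) ≤ volume B := by
        rw [hBdef]; exact measure_mono ball_subset_closedBall
      have h2 : 0 < volume (ball (0:𝔼) 1) := measure_ball_pos volume 0 one_pos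
      exact (lt_of_lt_of_le h2 h1).ne'
    · exact hBcomp.measure_lt_top.ne
  have hqconst : ∀ t ∈ Icc (0:ℝ) t₀, q.eval t = volB := by
    intro t ht
    have hCoV := MeasureTheory.lintegral_abs_det_fderiv_eq_addHaar_image volume hBmeas
      (fun x hx => (hDF t x (hBO hx)).hasFDerivWithinAt) (hinj t ht)
    rw [hsurj t ht] at hCoV
    have hcont' : ContinuousOn (fun x => (DF t x).det) B := by
      have heq : (fun x : 𝔼 => (DF t x).det) = fun x => (1 + t • N x).det :=
        funext fun x => hNdet t x
      rw [heq]
      apply (Continuous.matrix_det continuous_id).comp_continuousOn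
      exact continuousOn_const.add ((hNcont.mono hBO).const_smul t)
    have hint : IntegrableOn (fun x => (DF t x).det) B := hcont'.integrableOn_compact hBcomp
    have hlhs : (∫⁻ x in B, ENNReal.ofReal |(DF t x).det| ∂volume) =
        ENNReal.ofReal (∫ x in B, (DF t x).det ∂volume) := by
      rw [← MeasureTheory.ofReal_integral_eq_lintegral_ofReal hint.abs
        (Filter.Eventually.of_forall fun x => abs_nonneg _)]
      congr 1
      exact MeasureTheory.setIntegral_congr_fun hBmeas
        (fun x hx => abs_of_pos (hdetpos t ht x hx))
    rw [hlhs] at hCoV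
    have hnn : 0 ≤ ∫ x in B, (DF t x).det ∂volume :=
      MeasureTheory.setIntegral_nonneg hBmeas (fun x hx => (hdetpos t ht x hx).le)
    have htr := congrArg ENNReal.toReal hCoV
    rw [ENNReal.toReal_ofReal hnn] at htr
    calc q.eval t = ∫ x in B, (1 + t • N x).det := hqeval t
      _ = ∫ x in B, (DF t x).det := by
          exact MeasureTheory.setIntegral_congr_fun hBmeas (fun x _ => (hNdet t x).symm)
      _ = volB := htr
  -- q is constant
  have hqC : q = Polynomial.C volB := by
    have hroots : {x : ℝ | (q - Polynomial.C volB).IsRoot x}.Infinite := by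
      apply (Set.Icc_infinite ht₀pos).mono
      intro t ht
      simp only [mem_setOf_eq, Polynomial.IsRoot, Polynomial.eval_sub, Polynomial.eval_C]
      rw [hqconst t ht]
      ring
    have hzero := Polynomial.eq_zero_of_infinite_isRoot _ hroots
    exact sub_eq_zero.mp hzero
  -- evaluation at 1 vanishes
  have hdet0 : ∀ x ∈ B, (1 + (1:ℝ) • N x).det = 0 := by
    intro x hx
    have hxO := hBO hx
    rw [← hNdet 1 x]
    have hrdiff : DifferentiableAt ℝ r x :=
      (hr.contDiffAt (hOopen.mem_nhds hxO)).differentiableAt (by simp)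
    have hDr : HasFDerivAt r (DF 1 x) x := by
      have h1 := hDF 1 x hxO
      have hFr : F 1 = r := by
        funext y
        simp [hFdef, hrdef]
      rwa [hFr] at h1
    have horth : ∀ v : 𝔼, ⟪r x, (DF 1 x) v⟫ = 0 := by
      intro v
      have hev : (fun y => (⟪r y, r y⟫ : ℝ)) =ᶠ[nhds x] fun _ => (1:ℝ) := by
        filter_upwards [hOopen.mem_nhds hxO] with y hy using hrnorm y hy
      have hfd : fderiv ℝ (fun y => (⟪r y, r y⟫ : ℝ)) x = 0 := by
        rw [hev.fderiv_eq]
        exact fderiv_const_apply 1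
      have happ := fderiv_inner_apply ℝ hrdiff hrdiff v
      rw [hDr.fderiv, hfd] at happ
      simp only [ContinuousLinearMap.zero_apply] at happ
      have hcomm := real_inner_comm ((DF 1 x) v) (r x)
      linarith [happ.symm, hcomm]
    by_contra hne0
    have hde : LinearMap.det ((DF 1 x : 𝔼 →ₗ[ℝ] 𝔼)) ≠ 0 := hne0
    obtain ⟨v, hv⟩ := (LinearMap.equivOfDetNeZero _ hde).surjective (r x)
    have hval : (DF 1 x) v = r x := by
      rw [← hv]
      simp [LinearMap.equivOfDetNeZero, LinearEquiv.ofIsUnitDet_apply]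
    have h1 := horth v
    rw [hval, hrnorm x hxO] at h1
    exact one_ne_zero h1
  have hq1 : q.eval 1 = 0 := by
    rw [hqeval 1]
    rw [MeasureTheory.setIntegral_congr_fun hBmeas (fun x hx => hdet0 x hx)]
    simp
  rw [hqC] at hq1
  simp at hq1
  exact absurd hq1 (ne_of_gt hvolBpos)

end Milnor


section Assemble

variable {m : ℕ}

local notation "𝔼" => EuclideanSpace ℝ (Fin m)

theorem brouwer_closedBall_unit (T : 𝔼 → 𝔼) (hT : ContinuousOn T (closedBall 0 1))
    (hTm : MapsTo T (closedBall 0 1) (closedBall 0 1)) :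
    ∃ x ∈ closedBall (0:𝔼) 1, T x = x := by
  by_contra hcon
  push_neg at hcon
  have hcomp := isCompact_closedBall (0:𝔼) 1
  have hne : (closedBall (0:𝔼) 1).Nonempty := ⟨0, mem_closedBall_self zero_le_one⟩
  have hcont : ContinuousOn (fun x => ‖T x - x‖) (closedBall (0:𝔼) 1) :=
    (hT.sub continuousOn_id).norm
  obtain ⟨x₀, hx₀, hmin0⟩ := hcomp.exists_isMinOn hne hcont
  have hmin : ∀ x ∈ closedBall (0:𝔼) 1, ‖T x₀ - x₀‖ ≤ ‖T x - x‖ := fun x hx => hmin0 hx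
  set ε := ‖T x₀ - x₀‖ with hεdef
  have hεpos : 0 < ε := by
    rw [hεdef, norm_pos_iff, sub_ne_zero]
    exact hcon x₀ hx₀
  obtain ⟨g, hg, hgm, hgT⟩ := exists_smooth_approx T hT hTm (half_pos hεpos)
  apply smooth_no_fixed_point_absurd g hg hgm
  intro x hx heq
  have h1 := hgT x hx
  have h2 := hmin x hx
  rw [heq, norm_sub_rev] at h1
  linarith

theorem brouwer_closedBall (R : ℝ) (hR : 0 < R) (T : 𝔼 → 𝔼)
    (hT : ContinuousOn T (closedBall 0 R)) (hTm : MapsTo T (closedBall 0 R) (closedBall 0 R)) :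
    ∃ x ∈ closedBall (0:𝔼) R, T x = x := by
  set S : 𝔼 → 𝔼 := fun y => R⁻¹ • T (R • y) with hSdef
  have hmapsRy : ∀ y ∈ closedBall (0:𝔼) 1, R • y ∈ closedBall (0:𝔼) R := by
    intro y hy
    rw [mem_closedBall_zero_iff] at hy ⊢
    rw [norm_smul, Real.norm_of_nonneg hR.le]
    nlinarith
  have hS : ContinuousOn S (closedBall 0 1) := by
    apply ContinuousOn.const_smul _ R⁻¹
    exact hT.comp (continuous_const_smul R).continuousOn hmapsRy
  have hSm : MapsTo S (closedBall 0 1) (closedBall 0 1) := by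
    intro y hy
    have := hTm (hmapsRy y hy)
    rw [mem_closedBall_zero_iff] at this ⊢
    rw [hSdef]
    simp only []
    rw [norm_smul, norm_inv, Real.norm_of_nonneg hR.le]
    rw [inv_mul_le_iff₀ hR, mul_one]
    exact this
  obtain ⟨y, hy, hfix⟩ := brouwer_closedBall_unit S hS hSm
  refine ⟨R • y, hmapsRy y hy, ?_⟩
  calc T (R • y) = R • (R⁻¹ • T (R • y)) := (smul_inv_smul₀ hR.ne' _).symm
    _ = R • y := by rw [show R⁻¹ • T (R • y) = y from hfix]

end Assemble

theorem brouwer_box {m : ℕ} (lo hi : Fin m → ℝ) (hlh : lo ≤ hi)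
    (G : (Fin m → ℝ) → (Fin m → ℝ)) (hG : ContinuousOn G (Set.Icc lo hi))
    (hGm : Set.MapsTo G (Set.Icc lo hi) (Set.Icc lo hi)) :
    ∃ x ∈ Set.Icc lo hi, G x = x := by
  classical
  set clamp : (Fin m → ℝ) → (Fin m → ℝ) := fun x j => max (lo j) (min (hi j) (x j))
    with hclampdef
  have hclampcont : Continuous clamp :=
    continuous_pi fun j => continuous_const.max (continuous_const.min (continuous_apply j))
  have hclampmem : ∀ x, clamp x ∈ Set.Icc lo hi := by
    intro x
    rw [Set.mem_Icc]
    constructor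
    · intro j; exact le_max_left _ _
    · intro j; exact max_le (hlh j) (min_le_left _ _)
  have hclampid : ∀ x ∈ Set.Icc lo hi, clamp x = x := by
    intro x hx
    rw [Set.mem_Icc] at hx
    funext j
    simp only [hclampdef]
    rw [min_eq_right (hx.2 j), max_eq_right (hx.1 j)]
  set e := EuclideanSpace.equiv (Fin m) ℝ with hedef
  set K : Set (EuclideanSpace ℝ (Fin m)) := e ⁻¹' (Set.Icc lo hi) with hKdef
  have hKcomp : IsCompact K := by
    rw [hKdef]
    exact e.toHomeomorph.isCompact_preimage.mpr isCompact_Icc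
  obtain ⟨R₀, hR₀⟩ := hKcomp.isBounded.subset_closedBall 0
  set R : ℝ := max R₀ 1 with hRdef
  have hRpos : 0 < R := lt_of_lt_of_le one_pos (le_max_right _ _)
  have hKR : K ⊆ closedBall 0 R :=
    hR₀.trans (closedBall_subset_closedBall (le_max_left _ _))
  set H : EuclideanSpace ℝ (Fin m) → EuclideanSpace ℝ (Fin m) :=
    fun y => e.symm (G (clamp (e y))) with hHdef
  have hHcont : Continuous H := by
    apply e.symm.continuous.comp
    exact hG.comp_continuous (hclampcont.comp e.continuous) (fun y => hclampmem _)
  have hHK : ∀ y, H y ∈ K := by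
    intro y
    rw [hKdef, Set.mem_preimage, hHdef]
    simp only []
    rw [e.apply_symm_apply]
    exact hGm (hclampmem _)
  obtain ⟨y, hy, hfix⟩ := brouwer_closedBall R hRpos H hHcont.continuousOn
    (fun y _ => hKR (hHK y))
  have hyK : y ∈ K := by rw [← hfix]; exact hHK y
  have hyIcc : e y ∈ Set.Icc lo hi := hyK
  refine ⟨e y, hyIcc, ?_⟩
  have h1 : clamp (e y) = e y := hclampid _ hyIcc
  calc G (e y) = G (clamp (e y)) := by rw [h1]
    _ = e (H y) := by rw [hHdef]; exact (e.apply_symm_apply _).symm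
    _ = e y := by rw [hfix]




/-- Theorem 3 of the paper: joint under-approximation of the range of a vector-valued
function `f : ℝ^m → ℝ^n` from continuous Skolem functions `h i` witnessing, for each
component `i`, the AE proposition
`∀ z_i ∈ z_i, ∀ (x_j)_{j ∈ J_A^i}, ∃ (x_j)_{j ∈ J_E^i}, z_i = f_i(x)`,
where `J_E^i = π⁻¹(i)`. Then the box `z₁ × ⋯ × z_n` is contained in the range of `f`. -/
theorem joint_under_approx
    {m n : ℕ} (f : (Fin m → ℝ) → Fin n → ℝ) (π : Fin m → Fin n)
    (lo hi : Fin m → ℝ) (hx : lo ≤ hi)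
    (zlo zhi : Fin n → ℝ) (hz : zlo ≤ zhi)
    (hf : ContinuousOn f (Set.Icc lo hi))
    (h : Fin n → ℝ → (Fin m → ℝ) → (Fin m → ℝ))
    -- each h i is continuous in (z_i, x)
    (hcont : ∀ i, ContinuousOn (fun p : ℝ × (Fin m → ℝ) => h i p.1 p.2)
      (Set.Icc (zlo i) (zhi i) ×ˢ Set.Icc lo hi))
    -- h i depends only on the coordinates (x_j)_{j ∈ J_A^i}, i.e. those with π j ≠ i
    (hdep : ∀ i zi x x', (∀ j, π j ≠ i → x j = x' j) → h i zi x = h i zi x')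
    -- the assembled point stays in the box
    (hmaps : ∀ i, ∀ zi ∈ Set.Icc (zlo i) (zhi i), ∀ x ∈ Set.Icc lo hi,
      (fun j => if π j = i then h i zi x j else x j) ∈ Set.Icc lo hi)
    -- and is a selection: f_i of the assembled point is z_i
    (hsel : ∀ i, ∀ zi ∈ Set.Icc (zlo i) (zhi i), ∀ x ∈ Set.Icc lo hi,
      f (fun j => if π j = i then h i zi x j else x j) i = zi) :
    ∀ z ∈ Set.Icc zlo zhi, ∃ x ∈ Set.Icc lo hi, f x = z := by
  intro z hzmem'
  classical
  have hzmem : ∀ i, z i ∈ Set.Icc (zlo i) (zhi i) := by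
    rw [Set.mem_Icc] at hzmem'
    exact fun i => ⟨hzmem'.1 i, hzmem'.2 i⟩
  set G : (Fin m → ℝ) → (Fin m → ℝ) := fun x j => h (π j) (z (π j)) x j with hGdef
  have hGcont : ContinuousOn G (Set.Icc lo hi) := by
    apply continuousOn_pi.mpr
    intro j
    have hj : ContinuousOn (fun x => h (π j) (z (π j)) x) (Set.Icc lo hi) := by
      have h1 := hcont (π j)
      have h2 : ContinuousOn (fun x : Fin m → ℝ => ((z (π j), x) : ℝ × (Fin m → ℝ)))
          (Set.Icc lo hi) := continuousOn_const.prodMk continuousOn_id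
      exact h1.comp h2 (fun x hxm => Set.mk_mem_prod (hzmem (π j)) hxm)
    exact (continuous_apply j).comp_continuousOn hj
  have hGmaps : Set.MapsTo G (Set.Icc lo hi) (Set.Icc lo hi) := by
    intro x hxm
    have hkey : ∀ j : Fin m,
        (fun j' => if π j' = π j then h (π j) (z (π j)) x j' else x j') ∈ Set.Icc lo hi :=
      fun j => hmaps (π j) (z (π j)) (hzmem _) x hxm
    rw [Set.mem_Icc]
    constructor
    · intro j
      have := (Set.mem_Icc.mp (hkey j)).1 j
      simpa using this
    · intro j
      have := (Set.mem_Icc.mp (hkey j)).2 j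
      simpa using this
  obtain ⟨x, hxmem, hxfix⟩ := brouwer_box lo hi hx G hGcont hGmaps
  refine ⟨x, hxmem, ?_⟩
  funext i
  have hy : (fun j => if π j = i then h i (z i) x j else x j) = x := by
    funext j
    by_cases hj : π j = i
    · rw [if_pos hj]
      have hGj : h (π j) (z (π j)) x j = x j := congrFun hxfix j
      subst hj
      exact hGj
    · rw [if_neg hj]
  have hres := hsel i (z i) (hzmem i) x hxmem
  rw [hy] at hres
  exact hres
end

section
/- Let α : ℝ^p × ℝ^q → ℝ and β : ℝ^p × ℝ^q × ℝ^{p+q} → ℝ be continuous on compact boxes, and let g(w,u,ξ) = α(w,u) + β(w,u,ξ). Let I_α = [a̲, ā] be an interval such that for all a ∈ I_α and all w ∈ x_A there is a continuous selection u(w,a) ∈ x_E with α(w, u(w,a)) = a (continuous in a). Let O_β = [b̲, b̄] be a compact interval containing β(w,u,ξ) for all (w,u,ξ) ∈ x_A × x_E × x. If a̲ + b̄ ≤ ā + b̲, then the interval I_g = [a̲ + b̄, ā + b̲] satisfies: for all z ∈ I_g, all w ∈ x_A, and all ξ ∈ x, there exists u ∈ x_E with g(w,u,ξ) = z. -/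
/-!
Fix `z`, `w` and `ξ`. For `b ∈ [b̲, b̄]` the value `z - b` lies in `[a̲, ā]`, so
`b ↦ β (w, u (w, z - b), ξ)` is a continuous self-map of `[b̲, b̄]`; at a fixed point `b`
the selection `u = u (w, z - b)` gives `α (w, u) + β (w, u, ξ) = (z - b) + b = z`.
-/

open Set

theorem exists_mem_add_eq_of_continuousOn_section {E : Type*} [TopologicalSpace E]
    {α β : E → ℝ} {s : ℝ → E} {S : Set E} {alo ahi blo bhi z : ℝ}
    (hs : ContinuousOn s (Icc alo ahi)) (hsS : MapsTo s (Icc alo ahi) S)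
    (hαs : ∀ a ∈ Icc alo ahi, α (s a) = a)
    (hβ : ContinuousOn β S) (hβS : MapsTo β S (Icc blo bhi)) (hS : S.Nonempty)
    (hz : z ∈ Icc (alo + bhi) (ahi + blo)) :
    ∃ u ∈ S, α u + β u = z := by
  have hb : blo ≤ bhi := by
    obtain ⟨u, hu⟩ := hS
    exact (hβS hu).1.trans (hβS hu).2
  have hzb : MapsTo (z - ·) (Icc blo bhi) (Icc alo ahi) := fun b hb' =>
    ⟨by linarith [hz.1, hb'.2], by linarith [hz.2, hb'.1]⟩
  have hsz : MapsTo (fun b => s (z - b)) (Icc blo bhi) S := hsS.comp hzb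
  have hcont : ContinuousOn (fun b => β (s (z - b))) (Icc blo bhi) :=
    hβ.comp (hs.comp (continuousOn_const.sub continuousOn_id) hzb) hsz
  obtain ⟨b, hbI, hfix⟩ :=
    exists_mem_Icc_isFixedPt_of_mapsTo hcont hb (hβS.comp hsz)
  refine ⟨s (z - b), hsz hbI, ?_⟩
  rw [hαs _ (hzb hbI), hfix.eq, sub_add_cancel]

theorem decomposition_under_approx_general {p q : ℕ}
    (α : (Fin p → ℝ) × (Fin q → ℝ) → ℝ)
    (β : (Fin p → ℝ) × (Fin q → ℝ) × ((Fin p → ℝ) × (Fin q → ℝ)) → ℝ)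
    (loA hiA : Fin p → ℝ) (loE hiE : Fin q → ℝ)
    (hE : loE ≤ hiE)
    (alo ahi blo bhi : ℝ)
    (hβ : ContinuousOn β
      (Set.Icc loA hiA ×ˢ Set.Icc loE hiE ×ˢ (Set.Icc loA hiA ×ˢ Set.Icc loE hiE)))
    -- continuous selection witnessing that I_α under-approximates the robust range of α
    (usel : (Fin p → ℝ) → ℝ → (Fin q → ℝ))
    (huselcont : ∀ w ∈ Set.Icc loA hiA, ContinuousOn (usel w) (Set.Icc alo ahi))
    (huselmaps : ∀ w ∈ Set.Icc loA hiA, ∀ a ∈ Set.Icc alo ahi,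
      usel w a ∈ Set.Icc loE hiE)
    (huselsel : ∀ w ∈ Set.Icc loA hiA, ∀ a ∈ Set.Icc alo ahi, α (w, usel w a) = a)
    -- O_β over-approximates the range of β
    (hOβ : ∀ w ∈ Set.Icc loA hiA, ∀ u ∈ Set.Icc loE hiE,
      ∀ ξ ∈ Set.Icc loA hiA ×ˢ Set.Icc loE hiE, β (w, u, ξ) ∈ Set.Icc blo bhi) :
    ∀ z ∈ Set.Icc (alo + bhi) (ahi + blo), ∀ w ∈ Set.Icc loA hiA,
      ∀ ξ ∈ Set.Icc loA hiA ×ˢ Set.Icc loE hiE,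
        ∃ u ∈ Set.Icc loE hiE, α (w, u) + β (w, u, ξ) = z := by
  intro z hz w hw ξ hξ
  have hβw : ContinuousOn (fun u => β (w, u, ξ)) (Icc loE hiE) :=
    hβ.comp (continuousOn_const.prodMk (continuousOn_id.prodMk continuousOn_const))
      fun u hu => ⟨hw, hu, hξ⟩
  exact exists_mem_add_eq_of_continuousOn_section (huselcont w hw) (huselmaps w hw)
    (huselsel w hw) hβw (fun u hu => hOβ w hw u hu ξ hξ) (nonempty_Icc.2 hE) hz

/-- Theorem 5 of the paper: if `I_α = [a̲,ā]` under-approximates the robust range of `α`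
with a continuous selection `usel`, and `O_β = [b̲,b̄]` over-approximates the range of
`β`, then `[a̲+b̄, ā+b̲]` (when nonempty) under-approximates the robust range of
`g = α + β` with respect to `w` and `ξ`. -/
theorem decomposition_under_approx {p q : ℕ}
    (α : (Fin p → ℝ) × (Fin q → ℝ) → ℝ)
    (β : (Fin p → ℝ) × (Fin q → ℝ) × ((Fin p → ℝ) × (Fin q → ℝ)) → ℝ)
    (loA hiA : Fin p → ℝ) (loE hiE : Fin q → ℝ)
    (hA : loA ≤ hiA) (hE : loE ≤ hiE)
    (alo ahi blo bhi : ℝ)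
    (hα : ContinuousOn α (Set.Icc loA hiA ×ˢ Set.Icc loE hiE))
    (hβ : ContinuousOn β
      (Set.Icc loA hiA ×ˢ Set.Icc loE hiE ×ˢ (Set.Icc loA hiA ×ˢ Set.Icc loE hiE)))
    -- continuous selection witnessing that I_α under-approximates the robust range of α
    (usel : (Fin p → ℝ) → ℝ → (Fin q → ℝ))
    (huselcont : ∀ w ∈ Set.Icc loA hiA, ContinuousOn (usel w) (Set.Icc alo ahi))
    (huselmaps : ∀ w ∈ Set.Icc loA hiA, ∀ a ∈ Set.Icc alo ahi,
      usel w a ∈ Set.Icc loE hiE)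
    (huselsel : ∀ w ∈ Set.Icc loA hiA, ∀ a ∈ Set.Icc alo ahi, α (w, usel w a) = a)
    -- O_β over-approximates the range of β
    (hOβ : ∀ w ∈ Set.Icc loA hiA, ∀ u ∈ Set.Icc loE hiE,
      ∀ ξ ∈ Set.Icc loA hiA ×ˢ Set.Icc loE hiE, β (w, u, ξ) ∈ Set.Icc blo bhi)
    (hne : alo + bhi ≤ ahi + blo) :
    ∀ z ∈ Set.Icc (alo + bhi) (ahi + blo), ∀ w ∈ Set.Icc loA hiA,
      ∀ ξ ∈ Set.Icc loA hiA ×ˢ Set.Icc loE hiE,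
        ∃ u ∈ Set.Icc loE hiE, α (w, u) + β (w, u, ξ) = z :=
  decomposition_under_approx_general α β loA hiA loE hiE hE alo ahi blo bhi hβ usel huselcont
    huselmaps huselsel hOβ
end

section
/- Let f : ℝ → ℝ be twice continuously differentiable on a compact interval x with center x⁰ and radius r. Suppose ∇⁰ = |f′(x⁰)| > 0 and O_β = [b̲, b̄] is an interval containing ½ f″(ξ)(x − x⁰)² for all x, ξ ∈ x. If the interval [f(x⁰) − ∇⁰ r + b̄, f(x⁰) + ∇⁰ r + b̲] is nonempty, then it is contained in the range of f over x. -/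
/-!
Expanding `f` to second order at the midpoint gives `f a = f x⁰ - f'(x⁰) r + R_a` and
`f b = f x⁰ + f'(x⁰) r + R_b` with both remainders in `[b̲, b̄]`. Whatever the sign of `f'(x⁰)`,
one endpoint value lies below `f x⁰ - ∇⁰ r + b̄` and the other above `f x⁰ + ∇⁰ r + b̲`, so the
intermediate value theorem covers the interval between them.
-/

open Set

lemma exists_taylor_two_lagrange {f : ℝ → ℝ} {x₀ x : ℝ} (hx : x₀ ≠ x)
    (hf : ContDiffOn ℝ 2 f (uIcc x₀ x)) (hd : DifferentiableAt ℝ f x₀) :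
    ∃ ξ ∈ uIoo x₀ x,
      f x = f x₀ + deriv f x₀ * (x - x₀) + 1 / 2 * deriv (deriv f) ξ * (x - x₀) ^ 2 := by
  obtain ⟨ξ, hξ, h⟩ := taylor_mean_remainder_lagrange_iteratedDeriv (n := 1) hx hf
  have hlin : taylorWithinEval f 1 (uIcc x₀ x) x₀ x = f x₀ + deriv f x₀ * (x - x₀) := by
    rw [taylorWithinEval_succ, taylor_within_zero_eval, iteratedDerivWithin_one,
      hd.derivWithin (uniqueDiffOn_uIcc hx x₀ left_mem_uIcc)]
    simp [mul_comm]
  rw [hlin, iteratedDeriv_succ, iteratedDeriv_one] at h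
  refine ⟨ξ, hξ, ?_⟩
  norm_num [Nat.factorial] at h
  linarith

lemma ContDiffOn.exists_taylor_two_lagrange_of_mem_Icc {f : ℝ → ℝ} {a b x₀ x : ℝ}
    (hf : ContDiffOn ℝ 2 f (Icc a b)) (hx₀ : x₀ ∈ Ioo a b) (hx : x ∈ Icc a b) :
    ∃ ξ ∈ Icc a b,
      f x = f x₀ + deriv f x₀ * (x - x₀) + 1 / 2 * deriv (deriv f) ξ * (x - x₀) ^ 2 := by
  rcases eq_or_ne x₀ x with rfl | hne
  · exact ⟨x₀, Ioo_subset_Icc_self hx₀, by ring⟩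
  have hsub : uIcc x₀ x ⊆ Icc a b := uIcc_subset_Icc (Ioo_subset_Icc_self hx₀) hx
  have hd : DifferentiableAt ℝ f x₀ :=
    (hf.contDiffAt (Icc_mem_nhds hx₀.1 hx₀.2)).differentiableAt two_ne_zero
  obtain ⟨ξ, hξ, h⟩ := exists_taylor_two_lagrange hne (hf.mono hsub) hd
  exact ⟨ξ, hsub (uIoo_subset_uIcc_self hξ), h⟩

lemma Icc_sub_add_subset_uIcc {c d r lo hi ya yb Ra Rb : ℝ}
    (hya : ya = c - d * r + Ra) (hyb : yb = c + d * r + Rb)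
    (hRa : Ra ∈ Icc lo hi) (hRb : Rb ∈ Icc lo hi) :
    Icc (c - |d| * r + hi) (c + |d| * r + lo) ⊆ uIcc ya yb := by
  rcases abs_cases d with ⟨hd, -⟩ | ⟨hd, -⟩
  · exact (Icc_subset_Icc (by rw [hd]; linarith [hRa.2]) (by rw [hd]; linarith [hRb.1])).trans
      Icc_subset_uIcc
  · exact (Icc_subset_Icc (by rw [hd]; linarith [hRb.2]) (by rw [hd]; linarith [hRa.1])).trans
      Icc_subset_uIcc'

theorem order2_taylor_under_approx_general (f : ℝ → ℝ) (a b : ℝ) (hab : a ≤ b)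
    (x0 r : ℝ) (hx0 : x0 = (a + b) / 2) (hr : r = (b - a) / 2)
    (hf : ContDiffOn ℝ 2 f (Set.Icc a b))
    (grad0 : ℝ) (hgrad0 : grad0 = |deriv f x0|)
    (blo bhi : ℝ)
    (hrem : ∀ x ∈ Set.Icc a b, ∀ ξ ∈ Set.Icc a b,
      (1 / 2) * deriv (deriv f) ξ * (x - x0) ^ 2 ∈ Set.Icc blo bhi) :
    Set.Icc (f x0 - grad0 * r + bhi) (f x0 + grad0 * r + blo) ⊆ f '' Set.Icc a b := by
  have ha : a ∈ Icc a b := left_mem_Icc.2 hab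
  have hb : b ∈ Icc a b := right_mem_Icc.2 hab
  -- Away from `x = x0` we have `a < b`, so the midpoint is interior and Taylor applies.
  have htaylor : ∀ x ∈ Icc a b, ∃ ξ ∈ Icc a b,
      f x = f x0 + deriv f x0 * (x - x0) + 1 / 2 * deriv (deriv f) ξ * (x - x0) ^ 2 := by
    intro x hx
    rcases eq_or_ne x x0 with rfl | hne
    · exact ⟨x, hx, by ring⟩
    have hlt : a < b := hab.lt_of_ne (by rintro rfl; exact hne (by grind))
    exact hf.exists_taylor_two_lagrange_of_mem_Icc (by constructor <;> linarith) hx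
  obtain ⟨ξa, hξa, hfa⟩ := htaylor a ha
  obtain ⟨ξb, hξb, hfb⟩ := htaylor b hb
  calc Icc (f x0 - grad0 * r + bhi) (f x0 + grad0 * r + blo)
      ⊆ uIcc (f a) (f b) := by
        rw [hgrad0]
        refine Icc_sub_add_subset_uIcc (d := deriv f x0) ?_ ?_ (hrem a ha ξa hξa)
          (hrem b hb ξb hξb) <;> grind
    _ ⊆ f '' Icc a b := by
        have hivt := intermediate_value_uIcc (a := a) (b := b) (f := f)
        rw [uIcc_of_le hab] at hivt
        exact hivt hf.continuousOn

/-- One-dimensional, no-disturbance case of Corollary 1: a second-order Taylor-based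
under-approximating extension. With `x⁰` the midpoint and `r` the radius of `[a,b]`,
`∇⁰ = |f'(x⁰)| > 0`, and `[b̲,b̄]` enclosing the remainder `½f''(ξ)(x−x⁰)²`, the
interval `[f(x⁰) − ∇⁰r + b̄, f(x⁰) + ∇⁰r + b̲]`, if nonempty, is contained in the
range of `f` over `[a,b]`. -/
theorem order2_taylor_under_approx (f : ℝ → ℝ) (a b : ℝ) (hab : a ≤ b)
    (x0 r : ℝ) (hx0 : x0 = (a + b) / 2) (hr : r = (b - a) / 2)
    (hf : ContDiffOn ℝ 2 f (Set.Icc a b))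
    (grad0 : ℝ) (hgrad0 : grad0 = |deriv f x0|) (hpos : 0 < grad0)
    (blo bhi : ℝ)
    (hrem : ∀ x ∈ Set.Icc a b, ∀ ξ ∈ Set.Icc a b,
      (1 / 2) * deriv (deriv f) ξ * (x - x0) ^ 2 ∈ Set.Icc blo bhi)
    (hne : f x0 - grad0 * r + bhi ≤ f x0 + grad0 * r + blo) :
    Set.Icc (f x0 - grad0 * r + bhi) (f x0 + grad0 * r + blo) ⊆ f '' Set.Icc a b :=
  order2_taylor_under_approx_general f a b hab x0 r hx0 hr hf grad0 hgrad0 blo bhi hrem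
end

section
/- Let f : ℝ → ℝ be continuously differentiable on [a,b] with midpoint x⁰, symmetric partition points x^{−k}=a ≤ ⋯ ≤ x⁰ ≤ ⋯ ≤ x^k=b with dx^i = x^i − x^{i−1}, and for each i let ∇̄^i satisfy |f′(ξ)| ≤ ∇̄^i for all ξ ∈ [x^{−i}, x^i]. Then {f(x) : x ∈ [a,b]} ⊆ [f(x⁰) − Σ_{i=1}^k ∇̄^i dx^i, f(x⁰) + Σ_{i=1}^k ∇̄^i dx^i]. -/
/-!
Let `Iᵢ = [x^{−i}, x^i]`. By induction on `i`, `|f x − f x⁰| ≤ Σ_{j ≤ i} ∇̄ʲ dxʲ` on `Iᵢ`: a point of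
`I_{i+1} \ Iᵢ` lies within `dx^{i+1}` of an endpoint of `Iᵢ` (on the left this uses the symmetry of
the partition), and the mean value theorem on `I_{i+1}`, where `|f′| ≤ ∇̄^{i+1}`, bridges that gap.
-/

open Set

theorem Convex.abs_image_sub_le_mul_sub_of_abs_deriv_le {D : Set ℝ} (hD : Convex ℝ D)
    {f : ℝ → ℝ} (hf : ContinuousOn f D) (hf' : DifferentiableOn ℝ f (interior D)) {C : ℝ}
    (hC : ∀ x ∈ interior D, |deriv f x| ≤ C) {x y : ℝ} (hx : x ∈ D) (hy : y ∈ D)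
    (hxy : x ≤ y) : |f y - f x| ≤ C * (y - x) := by
  have upper := hD.image_sub_le_mul_sub_of_deriv_le hf hf'
    (fun ξ hξ => (le_abs_self _).trans (hC ξ hξ)) x hx y hy hxy
  have lower := hD.mul_sub_le_image_sub_of_le_deriv hf hf'
    (fun ξ hξ => neg_le_of_abs_le (hC ξ hξ)) x hx y hy hxy
  exact abs_sub_le_iff.2 ⟨upper, by linarith⟩

theorem abs_image_sub_le_add_mul_of_Icc_extend {f : ℝ → ℝ} {c l r l' r' S G d : ℝ}
    (hf : DifferentiableOn ℝ f (Icc l' r')) (hG : ∀ ξ ∈ Icc l' r', |deriv f ξ| ≤ G)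
    (hl' : l' ≤ l) (hlr : l ≤ r) (hr' : r ≤ r') (hdl : l - l' ≤ d) (hdr : r' - r ≤ d)
    (hS : ∀ y ∈ Icc l r, |f y - f c| ≤ S) :
    ∀ x ∈ Icc l' r', |f x - f c| ≤ S + G * d := by
  have hmem : Icc l r ⊆ Icc l' r' := Icc_subset_Icc hl' hr'
  have hG_nonneg : 0 ≤ G := (abs_nonneg _).trans (hG l (hmem ⟨le_rfl, hlr⟩))
  have lipschitz : ∀ ⦃u v⦄, u ∈ Icc l' r' → v ∈ Icc l' r' → u ≤ v → |f v - f u| ≤ G * (v - u) :=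
    fun u v hu hv huv => (convex_Icc l' r').abs_image_sub_le_mul_sub_of_abs_deriv_le
      hf.continuousOn (hf.mono interior_subset) (fun ξ hξ => hG ξ (interior_subset hξ)) hu hv huv
  intro x hx
  rcases lt_or_ge x l with hxl | hlx
  · have hfar := lipschitz hx (hmem ⟨le_rfl, hlr⟩) hxl.le
    have hgap : G * (l - x) ≤ G * d := mul_le_mul_of_nonneg_left (by linarith [hx.1]) hG_nonneg
    rw [abs_sub_comm] at hfar
    calc |f x - f c| ≤ |f x - f l| + |f l - f c| := abs_sub_le ..
      _ ≤ S + G * d := by linarith [hS l ⟨le_rfl, hlr⟩]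
  rcases le_or_gt x r with hxr | hrx
  · exact (hS x ⟨hlx, hxr⟩).trans (le_add_of_nonneg_right (mul_nonneg hG_nonneg (by linarith)))
  · have hfar := lipschitz (hmem ⟨hlr, le_rfl⟩) hx hrx.le
    have hgap : G * (x - r) ≤ G * d := mul_le_mul_of_nonneg_left (by linarith [hx.2]) hG_nonneg
    calc |f x - f c| ≤ |f x - f r| + |f r - f c| := abs_sub_le ..
      _ ≤ S + G * d := by linarith [hS r ⟨hlr, le_rfl⟩]

theorem abs_image_sub_le_sum_of_nested_Icc {f : ℝ → ℝ} {l r G : ℕ → ℝ} {c : ℝ} {n : ℕ}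
    (hl : ∀ i < n, l (i + 1) ≤ l i) (hr : ∀ i < n, r i ≤ r (i + 1))
    (hl₀ : l 0 = c) (hr₀ : r 0 = c) (hw : ∀ i < n, l i - l (i + 1) ≤ r (i + 1) - r i)
    (hf : ∀ i < n, DifferentiableOn ℝ f (Icc (l (i + 1)) (r (i + 1))))
    (hG : ∀ i < n, ∀ ξ ∈ Icc (l (i + 1)) (r (i + 1)), |deriv f ξ| ≤ G (i + 1)) :
    ∀ x ∈ Icc (l n) (r n), |f x - f c| ≤ ∑ i ∈ Finset.range n, G (i + 1) * (r (i + 1) - r i) := by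
  have hlr : ∀ m ≤ n, l m ≤ r m := by
    intro m hm
    induction m with
    | zero => rw [hl₀, hr₀]
    | succ m ih => linarith [hl m hm, hr m hm, ih (by omega)]
  suffices ∀ m ≤ n, ∀ x ∈ Icc (l m) (r m),
      |f x - f c| ≤ ∑ i ∈ Finset.range m, G (i + 1) * (r (i + 1) - r i) from this n le_rfl
  intro m hm
  induction m with
  | zero =>
    intro x hx
    rw [hl₀, hr₀, Icc_self, mem_singleton_iff] at hx
    simp [hx]
  | succ m ih =>
    rw [Finset.sum_range_succ]
    exact abs_image_sub_le_add_mul_of_Icc_extend (hf m hm) (hG m hm) (hl m hm) (hlr m (by omega))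
      (hr m hm) (hw m hm) le_rfl (ih (by omega))

theorem quadrature_over_approx_general (f : ℝ → ℝ) (a b : ℝ)
    (hf : ContDiffOn ℝ 1 f (Set.Icc a b))
    (k : ℕ) (xp : ℕ → ℝ)
    (hlo : xp 0 = a) (hhi : xp (2 * k) = b)
    (hmono : ∀ i < 2 * k, xp i ≤ xp (i + 1))
    (hsym : ∀ i ≤ k, xp (k + i) - xp k = xp k - xp (k - i))
    (G : ℕ → ℝ)
    (hG : ∀ i, 1 ≤ i → i ≤ k →
      ∀ ξ ∈ Set.Icc (xp (k - i)) (xp (k + i)), |deriv f ξ| ≤ G i) :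
    f '' Set.Icc a b ⊆
      Set.Icc
        (f (xp k) - ∑ i ∈ Finset.Icc 1 k, G i * (xp (k + i) - xp (k + i - 1)))
        (f (xp k) + ∑ i ∈ Finset.Icc 1 k, G i * (xp (k + i) - xp (k + i - 1))) := by
  have hxp : MonotoneOn xp (Iic (2 * k)) :=
    monotoneOn_of_le_succ ordConnected_Iic fun i _ _ hi => hmono i hi
  have hxp_le : ∀ {i j}, i ≤ j → j ≤ 2 * k → xp i ≤ xp j := fun hij hj =>
    hxp (mem_Iic.2 (hij.trans hj)) (mem_Iic.2 hj) hij
  have hring := abs_image_sub_le_sum_of_nested_Icc (f := f) (l := fun i => xp (k - i))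
    (r := fun i => xp (k + i)) (G := G) (c := xp k) (n := k)
    (fun i hi => hxp_le (by omega) (by omega)) (fun i hi => hxp_le (by omega) (by omega))
    rfl rfl (fun i hi => by linarith [hsym i hi.le, hsym (i + 1) hi])
    (fun i hi => (hf.differentiableOn one_ne_zero).mono <| Icc_subset_Icc
      (hlo ▸ hxp_le (by omega) (by omega)) (hhi ▸ hxp_le (by omega) le_rfl))
    (fun i hi => hG (i + 1) (by omega) hi)
  have hsum : ∑ i ∈ Finset.Icc 1 k, G i * (xp (k + i) - xp (k + i - 1)) =
      ∑ i ∈ Finset.range k, G (i + 1) * (xp (k + (i + 1)) - xp (k + i)) := by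
    rw [← Finset.Ico_add_one_right_eq_Icc, Finset.sum_Ico_eq_sum_range, Nat.add_sub_cancel]
    refine Finset.sum_congr rfl fun i _ => ?_
    rw [add_comm 1 i, Nat.add_succ_sub_one]
  rintro _ ⟨x, hx, rfl⟩
  have hbound := abs_le.1 (hring x (by rwa [Nat.sub_self, ← two_mul, hlo, hhi]))
  rw [hsum]
  exact ⟨by linarith [hbound.1], by linarith [hbound.2]⟩

/-- One-dimensional quadrature-refined over-approximation (Equation (7), Section 4.2):
with a symmetric partition about the midpoint and upper bounds `G i` of `|f'|` on each
nested interval `[x^{−i}, x^i]`, the range of `f` over `[a,b]` is contained in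
`[f(x⁰) − Σ G i · dxⁱ, f(x⁰) + Σ G i · dxⁱ]`. -/
theorem quadrature_over_approx (f : ℝ → ℝ) (a b : ℝ) (hab : a ≤ b)
    (hf : ContDiffOn ℝ 1 f (Set.Icc a b))
    (k : ℕ) (xp : ℕ → ℝ)
    (hlo : xp 0 = a) (hhi : xp (2 * k) = b)
    (hmono : ∀ i < 2 * k, xp i ≤ xp (i + 1))
    (hmid : xp k = (a + b) / 2)
    (hsym : ∀ i ≤ k, xp (k + i) - xp k = xp k - xp (k - i))
    (G : ℕ → ℝ)
    (hG : ∀ i, 1 ≤ i → i ≤ k →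
      ∀ ξ ∈ Set.Icc (xp (k - i)) (xp (k + i)), |deriv f ξ| ≤ G i) :
    f '' Set.Icc a b ⊆
      Set.Icc
        (f (xp k) - ∑ i ∈ Finset.Icc 1 k, G i * (xp (k + i) - xp (k + i - 1)))
        (f (xp k) + ∑ i ∈ Finset.Icc 1 k, G i * (xp (k + i) - xp (k + i - 1))) :=
  quadrature_over_approx_general f a b hf k xp hlo hhi hmono hsym G hG
end
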